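/- arXiv:1904.10104 — 8 statements merged into one kernel-verified Lean document; each statement's English description precedes it below -/
import Mathlib

section
/- Let (S,+) and (T,+) be commutative semigroups and φ : S → T a semigroup homomorphism. If A ⊆ S is piecewise syndetic in S and φ(S) is piecewise syndetic in T, then φ(A) is piecewise syndetic in T. -/
/-- `Thick B`: every finite set has a translate contained in `B`. -/
def Thick {S : Type*} [AddCommSemigroup S] (B : Set S) : Prop :=
  ∀ F : Finset S, ∃ x : S, ∀ f ∈ F, f + x ∈ B

/-- `PiecewiseSyndetic A`: some finite union of translates `-t+A` is thick. -/
def PiecewiseSyndetic {S : Type*} [AddCommSemigroup S] (A : Set S) : Prop :=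
  ∃ F : Finset S, Thick {s : S | ∃ t ∈ F, t + s ∈ A}

/-- `itAdd n t` is the `(n+1)`-fold sum `t + t + ⋯ + t`. -/
def itAdd {S : Type*} [AddCommSemigroup S] : ℕ → S → S
  | 0, t => t
  | n + 1, t => itAdd n t + t

theorem stmt_1 {S T : Type*} [AddCommSemigroup S] [AddCommSemigroup T]
    (φ : S → T) (hφ : ∀ a b : S, φ (a + b) = φ a + φ b) (A : Set S)
    (hA : PiecewiseSyndetic A) (him : PiecewiseSyndetic (Set.range φ)) :
    PiecewiseSyndetic (φ '' A) := by
  classical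
  obtain ⟨F, hF⟩ := hA
  obtain ⟨G, hG⟩ := him
  refine ⟨Finset.image (fun p : S × T => φ p.1 + p.2) (F ×ˢ G), ?_⟩
  intro K
  obtain ⟨x₁, hx₁⟩ := hG K
  simp only [Set.mem_setOf_eq, Set.mem_range] at hx₁
  choose g hg s hs using hx₁
  have hthick := hF (K.attach.image (fun k => s k.1 k.2))
  obtain ⟨y, hy⟩ := hthick
  refine ⟨x₁ + φ y, fun k hk => ?_⟩
  obtain ⟨t, htF, htA⟩ := hy (s k hk) (Finset.mem_image.mpr ⟨⟨k, hk⟩, Finset.mem_attach _ _, rfl⟩)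
  refine ⟨φ t + g k hk, Finset.mem_image.mpr ⟨(t, g k hk), Finset.mem_product.mpr ⟨htF, hg k hk⟩, rfl⟩, ?_⟩
  refine ⟨t + (s k hk + y), htA, ?_⟩
  rw [hφ, hφ, hs k hk]
  ac_rfl
end

section
/- Let S be a commutative semigroup and let M ⊆ S × S be piecewise syndetic. Then for any a ∈ ℕ, the set {(s + a·t, t) : (s,t) ∈ M} is piecewise syndetic in S × S, where a·t denotes the a-fold sum t + t + ... + t. -/
lemma itAdd_add {S : Type*} [AddCommSemigroup S] (n : ℕ) (x y : S) :
    itAdd n (x + y) = itAdd n x + itAdd n y := by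
  induction n with
  | zero => rfl
  | succ n ih => simp only [itAdd, ih, add_add_add_comm]

/-- the homomorphism (s,t) ↦ (s + (n+1)·t, t) -/
def phi {S : Type*} [AddCommSemigroup S] (n : ℕ) (p : S × S) : S × S :=
  (p.1 + itAdd n p.2, p.2)

lemma phi_add {S : Type*} [AddCommSemigroup S] (n : ℕ) (p q : S × S) :
    phi n (p + q) = phi n p + phi n q := by
  simp only [phi, Prod.mk_add_mk, Prod.fst_add, Prod.snd_add, itAdd_add, Prod.mk.injEq]
  exact ⟨add_add_add_comm _ _ _ _, trivial⟩

/-- the image of φ is thick -/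
lemma phi_thick {S : Type*} [AddCommSemigroup S] (n : ℕ) (z : S)
    (G : Finset (S × S)) : ∃ u : S × S, ∀ g ∈ G, ∃ q, g + u = phi n q := by
  classical
  induction G using Finset.induction_on with
  | empty => exact ⟨(z, z), by simp⟩
  | @insert g G hgG ih =>
    obtain ⟨u, hu⟩ := ih
    refine ⟨u + (itAdd n ((g + u).2 + z), z), ?_⟩
    intro h hh
    rcases Finset.mem_insert.1 hh with rfl | hh
    · refine ⟨((h + u).1, (h + u).2 + z), ?_⟩
      simp only [phi, Prod.ext_iff, Prod.fst_add, Prod.snd_add]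
      constructor
      · rw [← add_assoc]
      · rw [← add_assoc]
    · obtain ⟨q, hq⟩ := hu h hh
      refine ⟨q + (itAdd n (g + u).2, z), ?_⟩
      rw [phi_add, ← hq, ← add_assoc]
      congr 1
      simp only [phi, Prod.ext_iff]
      exact ⟨itAdd_add n _ _, trivial⟩

theorem stmt_3 {S : Type*} [AddCommSemigroup S] (M : Set (S × S))
    (hM : PiecewiseSyndetic M) (a : ℕ) (ha : 0 < a) :
    PiecewiseSyndetic
      {p : S × S | ∃ q ∈ M, p = (q.1 + itAdd (a - 1) q.2, q.2)} := by
  classical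
  set n := a - 1 with hn
  obtain ⟨F, hF⟩ := hM
  -- S is nonempty
  obtain ⟨⟨z, _⟩, -⟩ := hF ∅
  refine ⟨F.image (phi n), ?_⟩
  intro G
  -- push G into the image of phi
  obtain ⟨u, hu⟩ := phi_thick n z G
  have hu' : ∀ g : S × S, ∃ q, g ∈ G → g + u = phi n q := by
    intro g
    by_cases h : g ∈ G
    · exact (hu g h).imp fun q hq _ => hq
    · exact ⟨(z, z), fun h' => absurd h' h⟩
  choose q hq using hu'
  -- apply thickness of the witness for M
  obtain ⟨y, hy⟩ := hF (G.image q)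
  refine ⟨u + phi n y, ?_⟩
  intro g hg
  obtain ⟨f, hf, hfm⟩ := hy (q g) (Finset.mem_image_of_mem _ hg)
  refine ⟨phi n f, Finset.mem_image_of_mem _ hf, ?_⟩
  refine ⟨f + (q g + y), hfm, ?_⟩
  have : phi n f + (g + (u + phi n y)) = phi n (f + (q g + y)) := by
    rw [phi_add, phi_add, ← add_assoc g u, hq g hg]
  rw [this]; rfl
end

section
/- Let S be a countable commutative semigroup such that for every d ∈ ℕ the set dS is piecewise syndetic in S, and let A ⊆ S be piecewise syndetic. Then for every l ∈ ℕ, the set {(s,t) ∈ S × S : s + i·t ∈ A for all i = 0,1,...,l} is piecewise syndetic in S × S. -/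
open Filter Set

attribute [local instance] Ultrafilter.add Ultrafilter.addSemigroup

section Abstract

variable {T : Type*} [AddSemigroup T] [TopologicalSpace T] [CompactSpace T] [T2Space T]

/-- A (relative) closed left ideal of `E`. -/
def IsLI (E L : Set T) : Prop :=
  L.Nonempty ∧ IsClosed L ∧ L ⊆ E ∧ ∀ x ∈ L, ∀ e ∈ E, e + x ∈ L

/-- Minimal closed left ideal of `E`. -/
def IsMinLI (E L : Set T) : Prop := IsLI E L ∧ ∀ L', IsLI E L' → L' ⊆ L → L' = L

/-- Union of minimal closed left ideals. -/
def KK (E : Set T) : Set T := {x | ∃ M, IsMinLI E M ∧ x ∈ M}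

theorem exists_minLI {E L : Set T} (hL : IsLI E L) : ∃ M, IsMinLI E M ∧ M ⊆ L := by
  have hchain : ∀ c ⊆ {L' : Set T | IsLI E L'}, IsChain (· ⊆ ·) c → c.Nonempty →
      ∃ lb ∈ {L' : Set T | IsLI E L'}, ∀ s ∈ c, lb ⊆ s := by
    intro c hcS hc hcne
    refine ⟨⋂₀ c, ⟨?_, isClosed_sInter fun t ht => (hcS ht).2.1, ?_, ?_⟩,
      fun s hs => sInter_subset_of_mem hs⟩
    · have : Nonempty c := hcne.to_subtype
      have := IsCompact.nonempty_iInter_of_directed_nonempty_isCompact_isClosed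
        ((↑) : c → Set T) (DirectedOn.directed_val (IsChain.directedOn hc.symm))
        (fun i => (hcS i.2).1) (fun i => (hcS i.2).2.1.isCompact) (fun i => (hcS i.2).2.1)
      rwa [sInter_eq_iInter]
    · obtain ⟨t, ht⟩ := hcne
      exact (sInter_subset_of_mem ht).trans (hcS ht).2.2.1
    · intro x hx e he
      exact mem_sInter.2 fun t ht => (hcS ht).2.2.2 x (mem_sInter.1 hx t ht) e he
  obtain ⟨M, hML, hMmin⟩ := zorn_superset_nonempty {L' : Set T | IsLI E L'} hchain L hL
  exact ⟨M, ⟨hMmin.prop, fun L' h1 h2 => subset_antisymm h2 (hMmin.2 h1 h2)⟩, hML⟩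

theorem addLI (hc : ∀ r : T, Continuous (· + r)) {E : Set T} (hEc : IsClosed E)
    (hE : ∀ x ∈ E, ∀ y ∈ E, x + y ∈ E) {x : T} (hx : x ∈ E) :
    IsLI E ((· + x) '' E) := by
  refine ⟨⟨x + x, x, hx, rfl⟩, (hEc.isCompact.image (hc x)).isClosed, ?_, ?_⟩
  · rintro _ ⟨e, he, rfl⟩; exact hE e he x hx
  · rintro _ ⟨e, he, rfl⟩ e' he'
    exact ⟨e' + e, hE e' he' e he, add_assoc _ _ _⟩

theorem min_eq (hc : ∀ r : T, Continuous (· + r)) {E M : Set T} (hEc : IsClosed E)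
    (hE : ∀ x ∈ E, ∀ y ∈ E, x + y ∈ E)
    (hM : IsMinLI E M) {x : T} (hx : x ∈ M) : (· + x) '' E = M := by
  refine hM.2 _ (addLI hc hEc hE (hM.1.2.2.1 hx)) ?_
  rintro _ ⟨e, he, rfl⟩
  exact hM.1.2.2.2 x hx e he

theorem KK_subset_ideal (hc : ∀ r : T, Continuous (· + r)) {E J : Set T} (hEc : IsClosed E)
    (hE : ∀ x ∈ E, ∀ y ∈ E, x + y ∈ E)
    (hJE : J ⊆ E) (hJne : J.Nonempty)
    (hJl : ∀ j ∈ J, ∀ e ∈ E, e + j ∈ J) (hJr : ∀ j ∈ J, ∀ e ∈ E, j + e ∈ J) :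
    KK E ⊆ J := by
  rintro x ⟨M, hM, hxM⟩
  obtain ⟨j₀, hj₀⟩ := hJne
  have hxE : x ∈ E := hM.1.2.2.1 hxM
  have hyM : j₀ + x ∈ M := hM.1.2.2.2 x hxM j₀ (hJE hj₀)
  have hyJ : j₀ + x ∈ J := hJr _ hj₀ x hxE
  have heq := min_eq hc hEc hE hM hyM
  rw [← heq] at hxM
  obtain ⟨e, he, hex⟩ := hxM
  change e + (j₀ + x) = x at hex
  have := hJl _ hyJ e he
  rwa [hex] at this

theorem KK_transfer (hc : ∀ r : T, Continuous (· + r)) {E F : Set T}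
    (hFc : IsClosed F) (hF : ∀ x ∈ F, ∀ y ∈ F, x + y ∈ F)
    (hEc : IsClosed E) (hE : ∀ x ∈ E, ∀ y ∈ E, x + y ∈ E) (hEF : E ⊆ F)
    {x : T} (hxE : x ∈ E) (hx : x ∈ KK F) : x ∈ KK E := by
  obtain ⟨MF, hMF, hxMF⟩ := hx
  obtain ⟨ME, hME, hMEL⟩ := exists_minLI (addLI hc hEc hE hxE)
  -- idempotent in ME
  obtain ⟨e, heME, hee⟩ := exists_idempotent_in_compact_add_subsemigroup hc ME hME.1.1
    hME.1.2.1.isCompact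
    (fun a ha b hb => hME.1.2.2.2 b hb a (hME.1.2.2.1 ha))
  -- e ∈ MF
  have heL : e ∈ (· + x) '' E := hMEL heME
  obtain ⟨e₀, he₀, he₀e⟩ := heL
  have heMF : e ∈ MF := by
    rw [← he₀e]; exact hMF.1.2.2.2 x hxMF e₀ (hEF he₀)
  -- x = f + e for some f ∈ F
  have hMFeq := min_eq hc hFc hF hMF heMF
  rw [← hMFeq] at hxMF
  obtain ⟨f, hf, hfe⟩ := hxMF
  have hxe : x + e = x := by
    rw [← hfe, add_assoc, hee]
  have : x + e ∈ ME := hME.1.2.2.2 e heME x hxE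
  rw [hxe] at this
  exact ⟨ME, hME, this⟩

theorem KK_add_right (hc : ∀ r : T, Continuous (· + r)) {x r : T}
    (hx : x ∈ KK (univ : Set T)) : x + r ∈ KK (univ : Set T) := by
  obtain ⟨M, hM, hxM⟩ := hx
  refine ⟨(· + r) '' M, ⟨⟨⟨x + r, x, hxM, rfl⟩, (hM.1.2.1.isCompact.image (hc r)).isClosed,
    subset_univ _, ?_⟩, ?_⟩, x, hxM, rfl⟩
  · rintro _ ⟨m, hm, rfl⟩ e -
    exact ⟨e + m, hM.1.2.2.2 m hm e trivial, add_assoc _ _ _⟩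
  · rintro L' hL' hL'sub
    obtain ⟨z, hz⟩ := hL'.1
    obtain ⟨m₀, hm₀, hm₀z⟩ := hL'sub hz
    refine subset_antisymm hL'sub ?_
    rintro _ ⟨m, hm, rfl⟩
    have : m ∈ (· + m₀) '' univ := by
      rw [min_eq hc isClosed_univ (fun _ _ _ _ => trivial) hM hm₀]; exact hm
    obtain ⟨u, -, hu⟩ := this
    have : m + r = u + z := by rw [← hm₀z, ← hu, add_assoc]
    show m + r ∈ L'
    rw [this]
    exact hL'.2.2.2 z hz u trivial

theorem closure_add_closure (hc : ∀ r : T, Continuous (· + r)) {P Q R : Set T}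
    (hPl : ∀ a ∈ P, Continuous (a + ·)) (h : ∀ a ∈ P, ∀ b ∈ Q, a + b ∈ R) :
    ∀ a ∈ closure P, ∀ b ∈ closure Q, a + b ∈ closure R := by
  have step1 : ∀ a ∈ P, ∀ b ∈ closure Q, a + b ∈ closure R := by
    intro a ha b hb
    have : a + b ∈ (a + ·) '' closure Q := ⟨b, hb, rfl⟩
    have h2 := image_closure_subset_closure_image (hPl a ha) this
    refine closure_mono ?_ h2
    rintro _ ⟨q, hq, rfl⟩
    exact h a ha q hq
  intro a ha b hb
  have : a + b ∈ (· + b) '' closure P := ⟨a, ha, rfl⟩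
  have h2 := image_closure_subset_closure_image (hc b) this
  have h3 : (· + b) '' P ⊆ closure R := by
    rintro _ ⟨p, hp, rfl⟩
    exact step1 p hp b hb
  have := closure_mono h3 h2
  rwa [closure_closure] at this

end Abstract
section Ultra

variable {M : Type*} [AddSemigroup M] {N : Type*} [AddSemigroup N]

theorem umem_add (U V : Ultrafilter M) (s : Set M) :
    s ∈ U + V ↔ {a | {b | a + b ∈ s} ∈ V} ∈ U :=
  Ultrafilter.eventually_add U V (· ∈ s)

theorem upure_add (a : M) (V : Ultrafilter M) :
    (pure a : Ultrafilter M) + V = V.map (a + ·) := by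
  apply Ultrafilter.coe_injective
  apply Filter.ext
  intro s
  rw [Ultrafilter.mem_coe, umem_add]
  simp [Ultrafilter.mem_pure]
  rfl

theorem upure_add_pure (a b : M) :
    (pure a : Ultrafilter M) + pure b = pure (a + b) := by
  rw [upure_add]
  exact Ultrafilter.map_pure _ _

theorem umap_add (f : M → N) (hf : ∀ a b, f (a + b) = f a + f b) (U V : Ultrafilter M) :
    (U + V).map f = U.map f + V.map f := by
  apply Ultrafilter.coe_injective
  apply Filter.ext
  intro s
  simp only [Ultrafilter.mem_coe, Ultrafilter.mem_map, umem_add]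
  have hset : f ⁻¹' {c | f ⁻¹' {d | c + d ∈ s} ∈ V} = {a | {b | a + b ∈ f ⁻¹' s} ∈ V} := by
    ext a
    simp only [Set.mem_preimage, Set.mem_setOf_eq]
    have : f ⁻¹' {d | f a + d ∈ s} = {b | a + b ∈ f ⁻¹' s} := by
      ext b; simp [hf]
    rw [this]
    exact Iff.rfl
  rw [hset]

theorem ucontinuous_map (f : M → N) : Continuous (Ultrafilter.map f) :=
  ultrafilterBasis_is_basis.continuous_iff.2 <| Set.forall_mem_range.mpr fun s ↦ by
    exact ultrafilter_isOpen_basic (f ⁻¹' s)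

end Ultra

section Bridge

variable {S : Type*} [AddCommSemigroup S]

/-- Every piecewise syndetic set belongs to some ultrafilter in a minimal left ideal. -/
theorem ps_exists_min {A : Set S} (hA : PiecewiseSyndetic A) :
    ∃ p : Ultrafilter S, p ∈ KK (Set.univ : Set (Ultrafilter S)) ∧ A ∈ p := by
  obtain ⟨F₀, hth⟩ := hA
  set T₀ : Set S := {s | ∃ t ∈ F₀, t + s ∈ A} with hT₀
  have hSne : Nonempty S := ⟨(hth ∅).choose⟩
  -- an ultrafilter q with all "translates of T₀" in it
  have hq : ∃ q : Ultrafilter S, ∀ x : S, {y | x + y ∈ T₀} ∈ q := by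
    by_contra h
    push_neg at h
    have hinter : (Set.univ : Set (Ultrafilter S)) ∩ ⋂ x : S, {r : Ultrafilter S | {y | x + y ∈ T₀} ∈ r} = ∅ := by
      rw [Set.univ_inter, Set.eq_empty_iff_forall_notMem]
      intro q hq
      rw [Set.mem_iInter] at hq
      obtain ⟨x, hx⟩ := h q
      exact hx (hq x)
    obtain ⟨u, hu⟩ := isCompact_univ.elim_finite_subfamily_closed _
      (fun x : S => ultrafilter_isClosed_basic {y | x + y ∈ T₀}) hinter
    obtain ⟨z, hz⟩ := hth u
    rw [Set.univ_inter, Set.eq_empty_iff_forall_notMem] at hu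
    refine hu (pure z) ?_
    rw [Set.mem_iInter₂]
    intro x hx
    simpa using hz x hx
  obtain ⟨q, hq⟩ := hq
  -- minimal left ideal inside βS + q
  have hL₀ : IsLI (Set.univ : Set (Ultrafilter S)) ((· + q) '' Set.univ) :=
    addLI Ultrafilter.continuous_add_left isClosed_univ (fun _ _ _ _ => trivial) trivial
  obtain ⟨Mm, hMm, hMmL⟩ := exists_minLI hL₀
  obtain ⟨r₀, hr₀⟩ := hMm.1.1
  have hT₀r₀ : T₀ ∈ r₀ := by
    obtain ⟨u, -, hu⟩ := hMmL hr₀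
    rw [← hu, umem_add]
    have : {a : S | {b | a + b ∈ T₀} ∈ q} = Set.univ := by
      rw [Set.eq_univ_iff_forall]; exact fun a => hq a
    rw [this]
    exact Filter.univ_mem
  -- pick t ∈ F₀ with translate in r₀
  have : ∃ t ∈ F₀, {s | t + s ∈ A} ∈ r₀ := by
    have : T₀ = ⋃ t ∈ (F₀ : Set S), {s | t + s ∈ A} := by
      ext s; simp [hT₀]
    rw [this] at hT₀r₀
    rwa [Ultrafilter.finite_biUnion_mem_iff F₀.finite_toSet] at hT₀r₀
  obtain ⟨t, -, ht⟩ := this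
  refine ⟨pure t + r₀, ⟨Mm, hMm, hMm.1.2.2.2 r₀ hr₀ (pure t) trivial⟩, ?_⟩
  rw [umem_add]
  simpa using ht

/-- Every member of an ultrafilter in a minimal left ideal is piecewise syndetic. -/
theorem min_mem_ps {A : Set S} {p : Ultrafilter S}
    (hp : p ∈ KK (Set.univ : Set (Ultrafilter S))) (hA : A ∈ p) : PiecewiseSyndetic A := by
  obtain ⟨Mm, hMm, hpM⟩ := hp
  have key : ∀ r ∈ Mm, ∃ x : S, {y | x + y ∈ A} ∈ r := by
    intro r hr
    have := min_eq Ultrafilter.continuous_add_left isClosed_univ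
      (fun _ _ _ _ => trivial) hMm hr
    have hpmem : p ∈ (· + r) '' Set.univ := by rw [this]; exact hpM
    obtain ⟨u, -, hu⟩ := hpmem
    have : A ∈ u + r := by rw [← hu] at hA; exact hA
    rw [umem_add] at this
    obtain ⟨x, hx⟩ := Ultrafilter.nonempty_of_mem this
    exact ⟨x, hx⟩
  -- compactness: finitely many translates suffice
  have hcover : Mm ⊆ ⋃ x : S, {r : Ultrafilter S | {y | x + y ∈ A} ∈ r} := by
    intro r hr
    obtain ⟨x, hx⟩ := key r hr
    exact Set.mem_iUnion.2 ⟨x, hx⟩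
  obtain ⟨F, hF⟩ := hMm.1.2.1.isCompact.elim_finite_subcover _
    (fun x : S => ultrafilter_isOpen_basic {y | x + y ∈ A}) hcover
  refine ⟨F, ?_⟩
  intro G
  obtain ⟨r₀, hr₀⟩ := hMm.1.1
  have hW : ∀ g ∈ G, {b : S | ∃ t ∈ F, t + (g + b) ∈ A} ∈ r₀ := by
    intro g hg
    have hgr : pure g + r₀ ∈ Mm := hMm.1.2.2.2 r₀ hr₀ (pure g) trivial
    have := hF hgr
    rw [Set.mem_iUnion₂] at this
    obtain ⟨t, htF, ht⟩ := this
    rw [Set.mem_setOf_eq, umem_add] at ht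
    simp only [Ultrafilter.mem_pure] at ht
    refine Filter.mem_of_superset ht ?_
    intro b hb
    exact ⟨t, htF, hb⟩
  have hints : (⋂ g ∈ G, {b : S | ∃ t ∈ F, t + (g + b) ∈ A}) ∈ r₀ :=
    (Filter.biInter_finset_mem G).2 hW
  obtain ⟨x, hx⟩ := Ultrafilter.nonempty_of_mem hints
  refine ⟨x, ?_⟩
  intro g hg
  rw [Set.mem_iInter₂] at hx
  exact hx g hg

end Bridge

section Main

private def apF {S : Type*} [AddCommSemigroup S] : ℕ → S × S → S
  | 0, st => st.1
  | (j+1), st => st.1 + itAdd j st.2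

private theorem itAdd_add_dist {S : Type*} [AddCommSemigroup S] (i : ℕ) (a b : S) :
    itAdd i (a + b) = itAdd i a + itAdd i b := by
  induction i with
  | zero => rfl
  | succ n ih => show itAdd n (a + b) + (a + b) = _; rw [ih]; exact add_add_add_comm _ _ _ _

private theorem apF_add {S : Type*} [AddCommSemigroup S] (i : ℕ) (p q : S × S) :
    apF i (p + q) = apF i p + apF i q := by
  cases i with
  | zero => rfl
  | succ j =>
      show (p.1 + q.1) + itAdd j (p.2 + q.2) = (p.1 + itAdd j p.2) + (q.1 + itAdd j q.2)
      rw [itAdd_add_dist]; exact add_add_add_comm _ _ _ _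

theorem stmt_7 {S : Type*} [AddCommSemigroup S] [Countable S]
    (hS : ∀ d : ℕ, 0 < d → PiecewiseSyndetic {x : S | ∃ s : S, x = itAdd (d - 1) s})
    (A : Set S) (hA : PiecewiseSyndetic A) (l : ℕ) :
    PiecewiseSyndetic
      {p : S × S | p.1 ∈ A ∧ ∀ i < l, p.1 + itAdd i p.2 ∈ A} := by
  classical
  clear hS
  have hSne : Nonempty S := ⟨(hA.choose_spec ∅).choose⟩
  obtain ⟨p, hpK, hpA⟩ := ps_exists_min hA
  -- the ambient product semigroup Y
  let Y : Type _ := ℕ → Ultrafilter S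
  have hcY : ∀ r : Y, Continuous (· + r) := fun r =>
    continuous_pi fun i => (Ultrafilter.continuous_add_left (r i)).comp (continuous_apply i)
  -- the embedded images
  let Φ : S × S → Y := fun st i => pure (apF i st)
  let φh : Ultrafilter (S × S) → Y := fun q i => Ultrafilter.map (apF i) q
  have φh_cont : Continuous φh := continuous_pi fun i => ucontinuous_map (apF i)
  have φh_hom : ∀ q q', φh (q + q') = φh q + φh q' := fun q q' =>
    funext fun i => umap_add _ (fun a b => apF_add i a b) q q'
  have φh_pure : ∀ st, φh (pure st) = Φ st := fun st =>
    funext fun i => Ultrafilter.map_pure _ _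
  let I' : Set Y := Set.range Φ
  let Δ' : Set Y := Set.range (fun u : S => (fun _ : ℕ => (pure u : Ultrafilter S)))
  let J' : Set Y := I' ∪ Δ'
  -- algebra of the embedded points
  have hΦΦ : ∀ st st', Φ st + Φ st' = Φ (st + st') := fun st st' => funext fun i => by
    have h : (pure (apF i st) : Ultrafilter S) + pure (apF i st') = pure (apF i (st + st')) := by
      rw [upure_add_pure, apF_add]
    exact h
  have hδδ : ∀ u v : S, ((fun _ : ℕ => (pure u : Ultrafilter S)) + fun _ => pure v)
      = fun _ => pure (u + v) := fun u v => funext fun _ => upure_add_pure u v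
  have hΦδ : ∀ st (u : S), Φ st + (fun _ => pure u) = Φ (st.1 + u, st.2) := fun st u =>
    funext fun i => by
      have h : (pure (apF i st) : Ultrafilter S) + pure u = pure (apF i (st.1 + u, st.2)) := by
        rw [upure_add_pure]
        congr 1
        cases i with
        | zero => rfl
        | succ j => exact add_right_comm _ _ _
      exact h
  have hδΦ : ∀ (u : S) st, (fun _ : ℕ => (pure u : Ultrafilter S)) + Φ st
      = Φ (u + st.1, st.2) := fun u st =>
    funext fun i => by
      have h : (pure u : Ultrafilter S) + pure (apF i st) = pure (apF i (u + st.1, st.2)) := by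
        rw [upure_add_pure]
        congr 1
        cases i with
        | zero => rfl
        | succ j => exact (add_assoc _ _ _).symm
      exact h
  -- membership closure properties
  have hII : ∀ a ∈ I', ∀ b ∈ I', a + b ∈ I' := by
    rintro _ ⟨st, rfl⟩ _ ⟨st', rfl⟩; rw [hΦΦ]; exact Set.mem_range_self _
  have hJI : ∀ a ∈ J', ∀ b ∈ I', a + b ∈ I' := by
    rintro a ha _ ⟨st, rfl⟩
    rcases ha with ⟨st', rfl⟩ | ⟨u, rfl⟩
    · rw [hΦΦ]; exact Set.mem_range_self _
    · rw [hδΦ]; exact Set.mem_range_self _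
  have hIJ : ∀ a ∈ I', ∀ b ∈ J', a + b ∈ I' := by
    rintro _ ⟨st, rfl⟩ b hb
    rcases hb with ⟨st', rfl⟩ | ⟨u, rfl⟩
    · rw [hΦΦ]; exact Set.mem_range_self _
    · rw [hΦδ]; exact Set.mem_range_self _
  have hJJ : ∀ a ∈ J', ∀ b ∈ J', a + b ∈ J' := by
    rintro a ha b hb
    rcases ha with ha | ⟨u, rfl⟩
    · exact Or.inl (hIJ a ha b hb)
    · rcases hb with ⟨st, rfl⟩ | ⟨v, rfl⟩
      · exact Or.inl (hδΦ u st ▸ Set.mem_range_self _)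
      · exact Or.inr (hδδ u v ▸ Set.mem_range_self _)
  -- left continuity at embedded points
  have hpure_cont : ∀ g : ℕ → S, Continuous (((fun i => (pure (g i) : Ultrafilter S)) : Y) + ·) := by
    intro g
    have hfun : ∀ y : Y, (fun i => (y i).map (g i + ·)) = ((fun i => (pure (g i) : Ultrafilter S)) : Y) + y :=
      fun y => funext fun i => (upure_add (g i) (y i)).symm
    exact (continuous_pi fun i =>
      (ucontinuous_map (g i + ·)).comp (continuous_apply i)).congr hfun
  have hJcont : ∀ c ∈ J', Continuous (c + ·) := by
    rintro c hc
    rcases hc with ⟨st, rfl⟩ | ⟨u, rfl⟩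
    · exact hpure_cont (fun i => apF i st)
    · exact hpure_cont (fun _ => u)
  have hIcont : ∀ c ∈ I', Continuous (c + ·) := fun c hc => hJcont c (Or.inl hc)
  -- closures
  let E : Set Y := closure I'
  let E'' : Set Y := closure J'
  have hEc : IsClosed E := isClosed_closure
  have hE''c : IsClosed E'' := isClosed_closure
  have hEadd : ∀ a ∈ E, ∀ b ∈ E, a + b ∈ E := closure_add_closure hcY hIcont hII
  have hE''add : ∀ a ∈ E'', ∀ b ∈ E'', a + b ∈ E'' := closure_add_closure hcY hJcont hJJ
  have hEJl : ∀ a ∈ E'', ∀ b ∈ E, a + b ∈ E := closure_add_closure hcY hJcont hJI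
  have hEJr : ∀ a ∈ E, ∀ b ∈ E'', a + b ∈ E := closure_add_closure hcY hIcont hIJ
  have hEE'' : E ⊆ E'' := closure_mono Set.subset_union_left
  have hEne : E.Nonempty := by
    obtain ⟨x₀⟩ := hSne
    exact ⟨Φ (x₀, x₀), subset_closure (Set.mem_range_self _)⟩
  have hE''ne : E''.Nonempty := hEne.mono hEE''
  -- the range of φh is E
  have hran : Set.range φh = E := by
    apply subset_antisymm
    · rintro _ ⟨q, rfl⟩
      have hq : q ∈ closure (Set.range (pure : S × S → Ultrafilter (S × S))) := by
        rw [denseRange_pure.closure_eq]; trivial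
      have h2 := image_closure_subset_closure_image φh_cont (Set.mem_image_of_mem φh hq)
      refine closure_mono ?_ h2
      rintro _ ⟨_, ⟨st, rfl⟩, rfl⟩
      rw [φh_pure]
      exact Set.mem_range_self st
    · have hclosed : IsClosed (Set.range φh) := (isCompact_range φh_cont).isClosed
      rw [← hclosed.closure_eq]
      apply closure_mono
      rintro _ ⟨st, rfl⟩
      exact ⟨pure st, φh_pure st⟩
  -- the diagonal point
  obtain ⟨Mp, hMp, hpMp⟩ := hpK
  let pt : Y := fun _ => p
  have hptK : pt ∈ KK (Set.univ : Set Y) := by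
    refine ⟨{y : Y | ∀ i, y i ∈ Mp}, ⟨⟨⟨pt, fun i => hpMp⟩, ?_, Set.subset_univ _, ?_⟩, ?_⟩,
      fun i => hpMp⟩
    · have : {y : Y | ∀ i, y i ∈ Mp} = ⋂ i, (fun y : Y => y i) ⁻¹' Mp := by
        ext y; simp
      rw [this]
      exact isClosed_iInter fun i => hMp.1.2.1.preimage (continuous_apply i)
    · intro x hx e he i
      exact hMp.1.2.2.2 (x i) (hx i) (e i) trivial
    · intro L' hL' hsub
      obtain ⟨z, hz⟩ := hL'.1
      refine subset_antisymm hsub ?_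
      intro w hw
      have hchoice : ∀ i, ∃ v : Ultrafilter S, v + z i = w i := by
        intro i
        have hz_i : z i ∈ Mp := hsub hz i
        have heq := min_eq Ultrafilter.continuous_add_left isClosed_univ
          (fun _ _ _ _ => trivial) hMp hz_i
        have : w i ∈ (· + z i) '' Set.univ := by rw [heq]; exact hw i
        obtain ⟨v, -, hv⟩ := this
        exact ⟨v, hv⟩
      choose v hv using hchoice
      have hvz : v + z = w := funext hv
      rw [← hvz]
      exact hL'.2.2.2 z hz v trivial
  have hptE'' : pt ∈ E'' := by
    have hp_cl : p ∈ closure (Set.range (pure : S → Ultrafilter S)) := by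
      rw [denseRange_pure.closure_eq]; trivial
    have hdiag : Continuous (fun r : Ultrafilter S => ((fun _ : ℕ => r) : Y)) :=
      continuous_pi fun _ => continuous_id
    have h2 := image_closure_subset_closure_image hdiag (Set.mem_image_of_mem _ hp_cl)
    refine closure_mono ?_ h2
    rintro _ ⟨_, ⟨u, rfl⟩, rfl⟩
    exact Or.inr ⟨u, rfl⟩
  have hptKE'' : pt ∈ KK E'' :=
    KK_transfer hcY isClosed_univ (fun _ _ _ _ => trivial) hE''c hE''add
      (Set.subset_univ _) hptE'' hptK
  have hptE : pt ∈ E :=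
    KK_subset_ideal hcY hE''c hE''add hEE'' hEne
      (fun j hj e he => hEJl e he j hj) (fun j hj e he => hEJr j hj e he) hptKE''
  have hptKE : pt ∈ KK E :=
    KK_transfer hcY isClosed_univ (fun _ _ _ _ => trivial) hEc hEadd
      (Set.subset_univ _) hptE hptK
  -- the image of the minimal ideal of β(S×S)
  have hKK2ne : (KK (Set.univ : Set (Ultrafilter (S × S)))).Nonempty := by
    have hLI : IsLI (Set.univ : Set (Ultrafilter (S × S))) Set.univ :=
      ⟨Set.univ_nonempty, isClosed_univ, subset_rfl, fun _ _ _ _ => trivial⟩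
    obtain ⟨Mq, hMq, -⟩ := exists_minLI hLI
    obtain ⟨q, hq⟩ := hMq.1.1
    exact ⟨q, Mq, hMq, hq⟩
  let Jq : Set Y := φh '' KK (Set.univ : Set (Ultrafilter (S × S)))
  have hJqE : Jq ⊆ E := by
    rintro _ ⟨q, -, rfl⟩
    rw [← hran]
    exact Set.mem_range_self q
  have hJqne : Jq.Nonempty := hKK2ne.image _
  have hKKl : ∀ (q' : Ultrafilter (S × S)), ∀ q ∈ KK (Set.univ : Set (Ultrafilter (S × S))),
      q' + q ∈ KK (Set.univ : Set (Ultrafilter (S × S))) := by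
    rintro q' q ⟨M, hM, hqM⟩
    exact ⟨M, hM, hM.1.2.2.2 q hqM q' trivial⟩
  have hJql : ∀ j ∈ Jq, ∀ e ∈ E, e + j ∈ Jq := by
    rintro _ ⟨q, hq, rfl⟩ e he
    rw [← hran] at he
    obtain ⟨qe, rfl⟩ := he
    rw [← φh_hom]
    exact ⟨qe + q, hKKl qe q hq, rfl⟩
  have hJqr : ∀ j ∈ Jq, ∀ e ∈ E, j + e ∈ Jq := by
    rintro _ ⟨q, hq, rfl⟩ e he
    rw [← hran] at he
    obtain ⟨qe, rfl⟩ := he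
    rw [← φh_hom]
    exact ⟨q + qe, KK_add_right Ultrafilter.continuous_add_left hq, rfl⟩
  have hptJq : pt ∈ Jq :=
    KK_subset_ideal hcY hEc hEadd hJqE hJqne
      (fun j hj e he => hJql j hj e he) (fun j hj e he => hJqr j hj e he) hptKE
  obtain ⟨q₂, hq₂K, hq₂pt⟩ := hptJq
  -- conclude
  have hAi : ∀ i : ℕ, apF i ⁻¹' A ∈ q₂ := by
    intro i
    have h1 : A ∈ Ultrafilter.map (apF i) q₂ := by
      rw [show Ultrafilter.map (apF i) q₂ = p from congrFun hq₂pt i]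
      exact hpA
    exact Ultrafilter.mem_map.1 h1
  have hD : {pr : S × S | pr.1 ∈ A ∧ ∀ i < l, pr.1 + itAdd i pr.2 ∈ A} ∈ q₂ := by
    have hint : (⋂ i ∈ Finset.range (l + 1), apF i ⁻¹' A) ∈ q₂ :=
      (Filter.biInter_finset_mem _).2 fun i _ => hAi i
    refine Filter.mem_of_superset hint ?_
    intro pr hpr
    rw [Set.mem_iInter₂] at hpr
    refine ⟨hpr 0 (Finset.mem_range.2 (Nat.succ_pos l)), fun i hi => ?_⟩
    exact hpr (i + 1) (Finset.mem_range.2 (by omega))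
  exact min_mem_ps hq₂K hD

end Main
end

section
/- Let φ : S₁ → S₂ be a surjective homomorphism of countable commutative semigroups. If A ⊆ S₁ is quasi-central, then φ(A) is quasi-central in S₂. -/
/-- `QuasiCentral A`: there is a decreasing sequence of piecewise syndetic subsets
of `A` such that each member of each set admits a later set inside its translate. -/
def QuasiCentral {S : Type*} [AddCommSemigroup S] (A : Set S) : Prop :=
  ∃ C : ℕ → Set S, (∀ n, C n ⊆ A) ∧ (∀ n, C (n + 1) ⊆ C n) ∧
    (∀ n, PiecewiseSyndetic (C n)) ∧
    ∀ n, ∀ x ∈ C n, ∃ m, C m ⊆ {s : S | x + s ∈ C n}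

/-! Each of the three notions is preserved by the image under a surjective homomorphism:
finite sets downstairs lift to finite sets upstairs, and translates map to translates. -/

section

variable {S₁ S₂ : Type*} [AddCommSemigroup S₁] [AddCommSemigroup S₂]

theorem Thick.mono {B B' : Set S₁} (hB : Thick B) (h : B ⊆ B') : Thick B' := fun F =>
  (hB F).imp fun _ hx f hf => h (hx f hf)

theorem Thick.image {B : Set S₁} (hB : Thick B) (f : S₁ →ₙ+ S₂)
    (hf : Function.Surjective f) : Thick (f '' B) := by
  classical
  intro G
  obtain ⟨x, hx⟩ := hB (G.image (Function.surjInv hf))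
  refine ⟨f x, fun g hg => ⟨Function.surjInv hf g + x, hx _ (Finset.mem_image_of_mem _ hg), ?_⟩⟩
  rw [map_add, Function.surjInv_eq hf]

theorem PiecewiseSyndetic.image {A : Set S₁} (hA : PiecewiseSyndetic A) (f : S₁ →ₙ+ S₂)
    (hf : Function.Surjective f) : PiecewiseSyndetic (f '' A) := by
  classical
  obtain ⟨F, hF⟩ := hA
  refine ⟨F.image f, (hF.image f hf).mono ?_⟩
  rintro _ ⟨s, ⟨t, ht, hts⟩, rfl⟩
  exact ⟨f t, Finset.mem_image_of_mem f ht, t + s, hts, map_add f t s⟩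

theorem QuasiCentral.image {A : Set S₁} (hA : QuasiCentral A) (f : S₁ →ₙ+ S₂)
    (hf : Function.Surjective f) : QuasiCentral (f '' A) := by
  obtain ⟨C, hCA, hCanti, hCps, hCtrans⟩ := hA
  refine ⟨fun n => f '' C n, fun n => Set.image_mono (hCA n),
    fun n => Set.image_mono (hCanti n), fun n => (hCps n).image f hf, ?_⟩
  rintro n _ ⟨x, hx, rfl⟩
  obtain ⟨m, hm⟩ := hCtrans n x hx
  refine ⟨m, ?_⟩
  rintro _ ⟨s, hs, rfl⟩
  exact ⟨x + s, hm hs, map_add f x s⟩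
end

theorem stmt_12_general {S₁ S₂ : Type*} [AddCommSemigroup S₁] [AddCommSemigroup S₂]
    (φ : S₁ → S₂)
    (hφ : ∀ a b : S₁, φ (a + b) = φ a + φ b) (hsurj : Function.Surjective φ)
    (A : Set S₁) (hA : QuasiCentral A) : QuasiCentral (φ '' A) :=
  hA.image ⟨φ, hφ⟩ hsurj

theorem stmt_12 {S₁ S₂ : Type*} [AddCommSemigroup S₁] [AddCommSemigroup S₂]
    [Countable S₁] [Countable S₂] (φ : S₁ → S₂)
    (hφ : ∀ a b : S₁, φ (a + b) = φ a + φ b) (hsurj : Function.Surjective φ)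
    (A : Set S₁) (hA : QuasiCentral A) : QuasiCentral (φ '' A) :=
  stmt_12_general φ hφ hsurj A hA
end

section
/- Let S be a countable commutative semigroup such that dS is piecewise syndetic in S for all d ∈ ℕ. If M ⊆ S is quasi-central, then for every l ∈ ℕ the set {(a,b) ∈ S × S : a + i·b ∈ M for all i = 0,1,...,l} is quasi-central in S × S. -/
/-!
Work in `βT`, the ultrafilters on `T` with the extended addition: a compact right-topological
semigroup whose smallest ideal `K(βT)` is the union of its minimal left ideals. A set is
piecewise syndetic iff it belongs to a member of `K(βT)`, and, for countable `T`, it is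
quasi-central iff it belongs to an idempotent of `cl K(βT)`. Take such an idempotent `p ∋ M`.
The homomorphisms `(a, b) ↦ a + i • b` extend to `β(S × S) → βS`, and the points of
`cl K(β(S × S))` sent to `p` by all of them (`i ≤ l`) form a compact subsemigroup; an idempotent
in it contains the configuration set of `M`. It is nonempty because configuration sets of
piecewise syndetic sets are piecewise syndetic: for `w ∈ K(βS)`, van der Waerden's theorem puts
`(w, …, w)` in the image of `β(S × S)` in `(βS)^(l+1)`, and a point of the smallest ideal of
`(βS)^(l+1)` lying in that image is the image of a point of `K(β(S × S))`.
-/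

open Filter Set

attribute [local instance] Ultrafilter.add Ultrafilter.addSemigroup

section ArithmeticProgression

variable {S : Type*} [AddCommSemigroup S]

theorem itAdd_add_s13 (n : ℕ) (a b : S) : itAdd n (a + b) = itAdd n a + itAdd n b := by
  induction n with
  | zero => rfl
  | succ n ih => simp only [itAdd, ih, add_add_add_comm]

theorem coe_itAdd (n : ℕ) (e : S) :
    ((itAdd n e : S) : WithZero S) = (n + 1) • (e : WithZero S) := by
  induction n with
  | zero => simp [itAdd]
  | succ n ih => rw [itAdd, WithZero.coe_add, ih, succ_nsmul _ (n + 1)]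

/-- `apTerm i (a, b) = a + i • b`; as `S` need not have a zero, `i = 0` is a separate case. -/
def apTerm (i : ℕ) : S × S →ₙ+ S where
  toFun p := match i with
    | 0 => p.1
    | j + 1 => p.1 + itAdd j p.2
  map_add' p q := by
    cases i with
    | zero => rfl
    | succ j =>
      show p.1 + q.1 + itAdd j (p.2 + q.2) = p.1 + itAdd j p.2 + (q.1 + itAdd j q.2)
      rw [itAdd_add_s13, add_add_add_comm]

theorem coe_apTerm (i : ℕ) (p : S × S) :
    ((apTerm i p : S) : WithZero S) = p.1 + i • (p.2 : WithZero S) := by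
  cases i with
  | zero => simp [apTerm]
  | succ j => simp only [apTerm, AddHom.coe_mk, WithZero.coe_add, coe_itAdd]

theorem apTerm_add_fst (i : ℕ) (a : S) (p : S × S) :
    apTerm i (a + p.1, p.2) = a + apTerm i p := by
  cases i with
  | zero => rfl
  | succ j => exact add_assoc _ _ _

def apConfig (l : ℕ) (A : Set S) : Set (S × S) := {p | ∀ i ≤ l, apTerm i p ∈ A}

theorem apConfig_mono (l : ℕ) : Monotone (apConfig (S := S) l) :=
  fun _ _ hAB _ hp i hi => hAB (hp i hi)

theorem apConfig_eq_setOf (l : ℕ) (M : Set S) :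
    apConfig l M = {p : S × S | p.1 ∈ M ∧ ∀ i < l, p.1 + itAdd i p.2 ∈ M} := by
  ext p
  constructor
  · intro h
    exact ⟨h 0 l.zero_le, fun i hi => h (i + 1) hi⟩
  · rintro ⟨h0, h⟩ (_ | i) hi
    exacts [h0, h i hi]

theorem exists_apTerm_monochromatic [Nonempty S] {κ : Type*} [Finite κ] (c : S → κ) (l : ℕ) :
    ∃ p : S × S, ∃ k : κ, ∀ i ≤ l, c (apTerm i p) = k := by
  classical
  obtain ⟨s₀⟩ := ‹Nonempty S›
  -- van der Waerden needs a monoid: colour `WithZero S` through `τ m = m + s₀ ∈ S`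
  let τ : WithZero S → S := fun m => WithZero.recZeroCoe s₀ (· + s₀) m
  have hτ : ∀ m, (τ m : WithZero S) = m + s₀ := by
    intro m
    induction m with
    | zero => simp [τ]
    | coe s => simp [τ]
  obtain ⟨k, hk, m₀, col, hmono⟩ := Combinatorics.exists_mono_homothetic_copy
    ((Finset.range (l + 1)).image fun j => j • (s₀ : WithZero S)) (c ∘ τ)
  refine ⟨(τ m₀, itAdd (k - 1) s₀), col, fun i hi => ?_⟩
  have hτi :
      apTerm i (τ m₀, itAdd (k - 1) s₀) = τ (k • i • (s₀ : WithZero S) + m₀) := by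
    rw [← WithZero.coe_inj, coe_apTerm, hτ, hτ, coe_itAdd, Nat.sub_add_cancel hk, smul_smul,
      smul_smul, mul_comm]
    abel
  rw [hτi]
  exact hmono _ (Finset.mem_image_of_mem _ (Finset.mem_range.2 (Nat.lt_succ_of_le hi)))

end ArithmeticProgression

namespace Ultrafilter

variable {S S' : Type*} [AddSemigroup S] [AddSemigroup S']

theorem mem_add_iff {p q : Ultrafilter S} {A : Set S} :
    A ∈ p + q ↔ {x | {y | x + y ∈ A} ∈ q} ∈ p :=
  eventually_add p q (· ∈ A)

theorem mem_pure_add_iff {a : S} {q : Ultrafilter S} {A : Set S} :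
    A ∈ pure a + q ↔ {y | a + y ∈ A} ∈ q :=
  mem_add_iff.trans mem_pure

theorem continuous_pure_add (a : S) :
    Continuous (pure a + · : Ultrafilter S → Ultrafilter S) := by
  refine ultrafilterBasis_is_basis.continuous_iff.2 ?_
  rintro _ ⟨A, rfl⟩
  exact ultrafilter_isOpen_basic {y | a + y ∈ A}

theorem continuous_map {α β : Type*} (f : α → β) : Continuous (map f) := by
  refine ultrafilterBasis_is_basis.continuous_iff.2 ?_
  rintro _ ⟨A, rfl⟩
  exact ultrafilter_isOpen_basic (f ⁻¹' A)

theorem map_add (f : S →ₙ+ S') (p q : Ultrafilter S) : map f (p + q) = map f p + map f q := by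
  ext A
  simp only [mem_map, mem_add_iff, mem_preimage, _root_.map_add]
  rfl

def mapAddHom (f : S →ₙ+ S') : Ultrafilter S →ₙ+ Ultrafilter S' where
  toFun := map f
  map_add' := map_add f

theorem exists_mem_forall_mem_of_directed {α : Type*} {Y : Set (Ultrafilter α)} (hY : IsClosed Y)
    {ι : Type*} [Nonempty ι] {C : ι → Set α} (hC : Directed (· ⊇ ·) C)
    (h : ∀ i, ∃ q ∈ Y, C i ∈ q) : ∃ q ∈ Y, ∀ i, C i ∈ q := by
  have hdir : Directed (· ⊇ ·) fun i => Y ∩ {q | C i ∈ q} :=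
    hC.mono_comp (g := fun s => Y ∩ {q | s ∈ q}) _ fun _ _ hst _ hq =>
      ⟨hq.1, mem_of_superset hq.2 hst⟩
  obtain ⟨q, hq⟩ := IsCompact.nonempty_iInter_of_directed_nonempty_isCompact_isClosed _ hdir
    (fun i => h i) (fun i => (hY.inter (ultrafilter_isClosed_basic _)).isCompact)
    (fun i => hY.inter (ultrafilter_isClosed_basic _))
  obtain ⟨i⟩ := ‹Nonempty ι›
  exact ⟨q, (mem_iInter.1 hq i).1, fun j => (mem_iInter.1 hq j).2⟩

end Ultrafilter

section MinimalLeftIdeal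

variable {X : Type*} [AddSemigroup X]

structure IsLeftIdealIn (E : AddSubsemigroup X) (L : Set X) : Prop where
  nonempty : L.Nonempty
  subset : L ⊆ E
  add_mem : ∀ x ∈ E, ∀ y ∈ L, x + y ∈ L

variable {E : AddSubsemigroup X} {L : Set X}

theorem isLeftIdealIn_image_add_right {z : X} (hz : z ∈ E) :
    IsLeftIdealIn E ((· + z) '' E) where
  nonempty := ⟨z + z, z, hz, rfl⟩
  subset := by
    rintro _ ⟨x, hx, rfl⟩
    exact E.add_mem hx hz
  add_mem := by
    rintro x hx _ ⟨y, hy, rfl⟩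
    exact ⟨x + y, E.add_mem hx hy, add_assoc x y z⟩

theorem Minimal.image_add_right_eq (hL : Minimal (IsLeftIdealIn E) L) {z : X} (hz : z ∈ L) :
    (· + z) '' E = L := by
  have hsub : (· + z) '' E ⊆ L := by
    rintro _ ⟨x, hx, rfl⟩
    exact hL.prop.add_mem x hx z hz
  exact hsub.antisymm (hL.le_of_le (isLeftIdealIn_image_add_right (hL.prop.subset hz)) hsub)

theorem Minimal.exists_add_eq (hL : Minimal (IsLeftIdealIn (⊤ : AddSubsemigroup X)) L)
    {a b : X} (ha : a ∈ L) (hb : b ∈ L) : ∃ r, r + a = b := by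
  rw [← hL.image_add_right_eq ha] at hb
  obtain ⟨r, -, hr⟩ := hb
  exact ⟨r, hr⟩

theorem minimal_isLeftIdealIn_top_of_exists_add_eq
    (hL : IsLeftIdealIn (⊤ : AddSubsemigroup X) L)
    (h : ∀ a ∈ L, ∀ b ∈ L, ∃ r, r + a = b) :
    Minimal (IsLeftIdealIn (⊤ : AddSubsemigroup X)) L := by
  refine ⟨hL, fun L' hL' hL'L b hb => ?_⟩
  obtain ⟨a, ha⟩ := hL'.nonempty
  obtain ⟨r, rfl⟩ := h a (hL'L ha) b hb
  exact hL'.add_mem r (AddSubsemigroup.mem_top r) a ha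

theorem Minimal.subset_of_isIdeal (hL : Minimal (IsLeftIdealIn E) L) {I : Set X}
    (hI : IsLeftIdealIn E I) (hIr : ∀ y ∈ I, ∀ x ∈ E, y + x ∈ I) : L ⊆ I := by
  obtain ⟨z, hz⟩ := hI.nonempty
  obtain ⟨y, hy⟩ := hL.prop.nonempty
  have hLI : IsLeftIdealIn E (L ∩ I) :=
    ⟨⟨z + y, hL.prop.add_mem z (hI.subset hz) y hy, hIr z hz y (hL.prop.subset hy)⟩,
      inter_subset_left.trans hL.prop.subset,
      fun x hx w hw => ⟨hL.prop.add_mem x hx w hw.1, hI.add_mem x hx w hw.2⟩⟩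
  exact (hL.le_of_le hLI inter_subset_left).trans inter_subset_right

theorem Minimal.pi_const (hL : Minimal (IsLeftIdealIn (⊤ : AddSubsemigroup X)) L) (ι : Type*) :
    Minimal (IsLeftIdealIn (⊤ : AddSubsemigroup (ι → X))) (univ.pi fun _ : ι => L) := by
  obtain ⟨z, hz⟩ := hL.prop.nonempty
  refine minimal_isLeftIdealIn_top_of_exists_add_eq
    ⟨⟨fun _ => z, fun _ _ => hz⟩, fun _ _ => AddSubsemigroup.mem_top _,
      fun x _ y hy i _ => hL.prop.add_mem (x i) (AddSubsemigroup.mem_top _) (y i) (hy i trivial)⟩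
    fun a ha b hb => ?_
  choose r hr using fun i => hL.exists_add_eq (ha i trivial) (hb i trivial)
  exact ⟨r, funext hr⟩

variable (X) in
/-- `K(X)`, the smallest two-sided ideal when `X` is a compact right-topological semigroup. -/
def smallestIdeal : Set X :=
  {x | ∃ L, Minimal (IsLeftIdealIn (⊤ : AddSubsemigroup X)) L ∧ x ∈ L}

theorem add_mem_smallestIdeal_left (p : X) {x : X} (hx : x ∈ smallestIdeal X) :
    p + x ∈ smallestIdeal X := by
  obtain ⟨L, hL, hxL⟩ := hx
  exact ⟨L, hL, hL.prop.add_mem p (AddSubsemigroup.mem_top p) x hxL⟩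

theorem add_mem_smallestIdeal_right {x : X} (hx : x ∈ smallestIdeal X) (p : X) :
    x + p ∈ smallestIdeal X := by
  obtain ⟨L, hL, hxL⟩ := hx
  refine ⟨(· + p) '' L, minimal_isLeftIdealIn_top_of_exists_add_eq
    ⟨⟨x + p, x, hxL, rfl⟩, fun _ _ => AddSubsemigroup.mem_top _, ?_⟩ ?_, x, hxL, rfl⟩
  · rintro w - _ ⟨y, hy, rfl⟩
    exact ⟨w + y, hL.prop.add_mem w (AddSubsemigroup.mem_top w) y hy, add_assoc w y p⟩
  · rintro _ ⟨a, ha, rfl⟩ _ ⟨b, hb, rfl⟩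
    obtain ⟨r, hr⟩ := hL.exists_add_eq ha hb
    exact ⟨r, by rw [← add_assoc, hr]⟩

theorem const_mem_smallestIdeal_pi {x : X} (hx : x ∈ smallestIdeal X) (ι : Type*) :
    (fun _ : ι => x) ∈ smallestIdeal (ι → X) := by
  obtain ⟨L, hL, hxL⟩ := hx
  exact ⟨_, hL.pi_const ι, fun _ _ => hxL⟩

variable [TopologicalSpace X] [CompactSpace X]

theorem isLeftIdealIn_sInter_of_isChain {c : Set (Set X)}
    (hc : c ⊆ {L | IsLeftIdealIn E L ∧ IsClosed L}) (hchain : IsChain (· ⊆ ·) c)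
    (hne : c.Nonempty) : IsLeftIdealIn E (⋂₀ c) := by
  have : Nonempty c := hne.to_subtype
  obtain ⟨L, hL⟩ := hne
  refine ⟨?_, (sInter_subset_of_mem hL).trans (hc hL).1.subset,
    fun x hx y hy => mem_sInter.2 fun L hL => (hc hL).1.add_mem x hx y (mem_sInter.1 hy L hL)⟩
  rw [sInter_eq_iInter]
  exact IsCompact.nonempty_iInter_of_directed_nonempty_isCompact_isClosed _
    (DirectedOn.directed_val (IsChain.directedOn hchain.symm)) (fun L => (hc L.2).1.nonempty)
    (fun L => (hc L.2).2.isCompact) fun L => (hc L.2).2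

theorem Minimal.isCompact (hcont : ∀ r : X, Continuous (· + r)) (hE : IsClosed (E : Set X))
    (hL : Minimal (IsLeftIdealIn E) L) : IsCompact L := by
  obtain ⟨z, hz⟩ := hL.prop.nonempty
  rw [← hL.image_add_right_eq hz]
  exact hE.isCompact.image (hcont z)

variable [T2Space X]

theorem exists_minimal_isLeftIdealIn_subset (hcont : ∀ r : X, Continuous (· + r))
    (hE : IsClosed (E : Set X)) (hL : IsLeftIdealIn E L) :
    ∃ L' ⊆ L, Minimal (IsLeftIdealIn E) L' := by
  have hclosed : ∀ z, IsClosed ((· + z) '' (E : Set X)) := fun z =>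
    (hE.isCompact.image (hcont z)).isClosed
  have image_subset :
      ∀ {L'}, IsLeftIdealIn E L' → ∀ {z}, z ∈ L' → (· + z) '' (E : Set X) ⊆ L' := by
    rintro L' hL' z hz _ ⟨x, hx, rfl⟩
    exact hL'.add_mem x hx z hz
  obtain ⟨z, hz⟩ := hL.nonempty
  obtain ⟨m, hmz, hm⟩ := zorn_superset_nonempty {L | IsLeftIdealIn E L ∧ IsClosed L}
    (fun c hc hchain hne => ⟨⋂₀ c, ⟨isLeftIdealIn_sInter_of_isChain hc hchain hne,
      isClosed_sInter fun L hL => (hc hL).2⟩, fun _ => sInter_subset_of_mem⟩)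
    _ ⟨isLeftIdealIn_image_add_right (hL.subset hz), hclosed z⟩
  -- `m` is minimal among all left ideals, since each contains a closed one `E + y`
  refine ⟨m, hmz.trans (image_subset hL hz), hm.prop.1, fun L' hL' hL'm => ?_⟩
  obtain ⟨y, hy⟩ := hL'.nonempty
  exact (hm.le_of_le ⟨isLeftIdealIn_image_add_right (hL'.subset hy), hclosed y⟩
    ((image_subset hL' hy).trans hL'm)).trans (image_subset hL' hy)

theorem Minimal.exists_idempotent (hcont : ∀ r : X, Continuous (· + r))
    (hE : IsClosed (E : Set X)) (hL : Minimal (IsLeftIdealIn E) L) : ∃ f ∈ L, f + f = f :=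
  exists_idempotent_in_compact_add_subsemigroup hcont L hL.prop.nonempty (hL.isCompact hcont hE)
    fun x hx y hy => hL.prop.add_mem x (hL.prop.subset hx) y hy

theorem smallestIdeal_nonempty [Nonempty X] (hcont : ∀ r : X, Continuous (· + r)) :
    (smallestIdeal X).Nonempty := by
  obtain ⟨L, -, hL⟩ := exists_minimal_isLeftIdealIn_subset hcont isClosed_univ
    (⟨univ_nonempty, subset_univ _, fun _ _ _ _ => mem_univ _⟩ :
      IsLeftIdealIn (⊤ : AddSubsemigroup X) univ)
  obtain ⟨x, hx⟩ := hL.prop.nonempty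
  exact ⟨x, L, hL, hx⟩

theorem exists_minimal_isLeftIdealIn_mem (hcont : ∀ r : X, Continuous (· + r))
    (hE : IsClosed (E : Set X)) {x : X} (hxK : x ∈ smallestIdeal X) (hxE : x ∈ E) :
    ∃ L, Minimal (IsLeftIdealIn E) L ∧ x ∈ L := by
  obtain ⟨LX, hLX, hxLX⟩ := hxK
  obtain ⟨L, hLx, hL⟩ :=
    exists_minimal_isLeftIdealIn_subset hcont hE (isLeftIdealIn_image_add_right hxE)
  obtain ⟨f, hfL, hff⟩ := hL.exists_idempotent hcont hE
  have hfLX : f ∈ LX := by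
    obtain ⟨y, -, rfl⟩ := hLx hfL
    exact hLX.prop.add_mem y (AddSubsemigroup.mem_top y) x hxLX
  obtain ⟨s, rfl⟩ := hLX.exists_add_eq hfLX hxLX
  have hfix : s + f + f = s + f := by rw [add_assoc, hff]
  exact ⟨L, hL, hfix ▸ hL.prop.add_mem _ hxE f hfL⟩

theorem AddHom.mem_image_smallestIdeal {Y : Type*} [AddSemigroup Y] [TopologicalSpace Y]
    [CompactSpace Y] [T2Space Y] (hcontX : ∀ r : X, Continuous (· + r))
    (hcontY : ∀ r : Y, Continuous (· + r)) (φ : X →ₙ+ Y) (hφ : Continuous φ) {y : Y}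
    (hyK : y ∈ smallestIdeal Y) (hy : y ∈ range φ) : y ∈ φ '' smallestIdeal X := by
  have : Nonempty X := ⟨hy.choose⟩
  obtain ⟨L, hL, hyL⟩ :=
    exists_minimal_isLeftIdealIn_mem hcontY (E := φ.srange) (isCompact_range hφ).isClosed hyK hy
  refine hL.subset_of_isIdeal
    ⟨(smallestIdeal_nonempty hcontX).image φ, image_subset_range _ _, ?_⟩ ?_ hyL
  · rintro _ ⟨a, rfl⟩ _ ⟨k, hk, rfl⟩
    exact ⟨a + k, add_mem_smallestIdeal_left a hk, map_add φ a k⟩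
  · rintro _ ⟨k, hk, rfl⟩ _ ⟨a, rfl⟩
    exact ⟨k + a, add_mem_smallestIdeal_right hk a, map_add φ k a⟩

end MinimalLeftIdeal

section PiecewiseSyndetic

theorem add_mem_closure_smallestIdeal_left {S : Type*} [AddSemigroup S] (p : Ultrafilter S)
    {q : Ultrafilter S} (hq : q ∈ closure (smallestIdeal (Ultrafilter S))) :
    p + q ∈ closure (smallestIdeal (Ultrafilter S)) :=
  denseRange_pure.induction_on p (isClosed_closure.preimage (Ultrafilter.continuous_add_left q))
    fun x => map_mem_closure (Ultrafilter.continuous_pure_add x) hq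
      fun _ hk => add_mem_smallestIdeal_left _ hk

variable {S : Type*} [AddCommSemigroup S]

theorem Thick.exists_ultrafilter {T : Set S} (hT : Thick T) :
    ∃ u : Ultrafilter S, ∀ s, {y | s + y ∈ T} ∈ u := by
  let f : Finset S → Filter S := fun F => 𝓟 {y | ∀ s ∈ F, s + y ∈ T}
  have hdir : Directed (· ≥ ·) f :=
    Antitone.directed_ge fun F G hFG =>
      principal_mono.2 fun y hy s hs => hy s (Finset.mem_of_subset hFG hs)
  have : (⨅ F, f F).NeBot := iInf_neBot_of_directed' hdir fun F => principal_neBot_iff.2 (hT F)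
  exact ⟨Ultrafilter.of (⨅ F, f F), fun s =>
    Ultrafilter.of_le _ (mem_iInf_of_mem {s} (by simp [f]))⟩

theorem PiecewiseSyndetic.exists_mem_smallestIdeal {A : Set S} (hA : PiecewiseSyndetic A) :
    ∃ p ∈ smallestIdeal (Ultrafilter S), A ∈ p := by
  obtain ⟨H, hH⟩ := hA
  obtain ⟨u, hu⟩ := hH.exists_ultrafilter
  obtain ⟨L, hLu, hL⟩ := exists_minimal_isLeftIdealIn_subset Ultrafilter.continuous_add_left
    isClosed_univ (isLeftIdealIn_image_add_right (AddSubsemigroup.mem_top u))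
  obtain ⟨q, hq⟩ := hL.prop.nonempty
  have hHq : (⋃ t ∈ (H : Set S), {s | t + s ∈ A}) ∈ q := by
    obtain ⟨r, -, rfl⟩ := hLu hq
    exact Ultrafilter.mem_add_iff.2 (univ_mem' fun x => mem_of_superset (hu x) (by simp))
  obtain ⟨t, -, ht⟩ := (Ultrafilter.finite_biUnion_mem_iff H.finite_toSet).1 hHq
  exact ⟨pure t + q, ⟨L, hL, hL.prop.add_mem _ (AddSubsemigroup.mem_top _) q hq⟩,
    Ultrafilter.mem_pure_add_iff.2 ht⟩

theorem piecewiseSyndetic_of_mem_smallestIdeal {A : Set S} {p : Ultrafilter S}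
    (hp : p ∈ smallestIdeal (Ultrafilter S)) (hA : A ∈ p) : PiecewiseSyndetic A := by
  obtain ⟨L, hL, hpL⟩ := hp
  -- each `q ∈ L` satisfies `p ∈ βS + q`, so `q` contains a translate `-x + A`
  have hcover : L ⊆ ⋃ x : S, {q | {y | x + y ∈ A} ∈ q} := by
    intro q hq
    obtain ⟨r, rfl⟩ := hL.exists_add_eq hq hpL
    obtain ⟨x, hx⟩ := Ultrafilter.nonempty_of_mem (Ultrafilter.mem_add_iff.1 hA)
    exact mem_iUnion.2 ⟨x, hx⟩
  obtain ⟨H, hH⟩ := (hL.isCompact Ultrafilter.continuous_add_left isClosed_univ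
    ).elim_finite_subcover _ (fun x => ultrafilter_isOpen_basic _) hcover
  refine ⟨H, fun F => ?_⟩
  have hF : ∀ s : S, {y | s + y ∈ {s' | ∃ t ∈ H, t + s' ∈ A}} ∈ p := by
    intro s
    obtain ⟨t, htH, ht⟩ :=
      mem_iUnion₂.1 (hH (hL.prop.add_mem (pure s) (AddSubsemigroup.mem_top _) p hpL))
    exact mem_of_superset (Ultrafilter.mem_pure_add_iff.1 ht) fun z hz => ⟨t, htH, hz⟩
  obtain ⟨x, hx⟩ := Ultrafilter.nonempty_of_mem ((biInter_finset_mem F).2 fun s _ => hF s)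
  exact ⟨x, fun f hf => mem_iInter₂.1 hx f hf⟩

theorem piecewiseSyndetic_of_mem_closure_smallestIdeal {A : Set S} {p : Ultrafilter S}
    (hp : p ∈ closure (smallestIdeal (Ultrafilter S))) (hA : A ∈ p) : PiecewiseSyndetic A := by
  obtain ⟨q, hAq, hqK⟩ := mem_closure_iff.1 hp _ (ultrafilter_isOpen_basic A) hA
  exact piecewiseSyndetic_of_mem_smallestIdeal hqK hAq

theorem PiecewiseSyndetic.apConfig_nonempty {A : Set S} (hA : PiecewiseSyndetic A) (l : ℕ) :
    (apConfig l A).Nonempty := by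
  obtain ⟨H, hH⟩ := hA
  obtain ⟨u, hu⟩ := hH.exists_ultrafilter
  have : Nonempty S := ⟨(u.nonempty_of_mem univ_mem).some⟩
  have hcol : ∀ s : S, ∃ t : H, {y | t + (s + y) ∈ A} ∈ u := by
    intro s
    have : (⋃ t ∈ (H : Set S), {y | t + (s + y) ∈ A}) ∈ u :=
      mem_of_superset (hu s) fun y ⟨t, ht, hy⟩ => mem_biUnion ht hy
    obtain ⟨t, ht, hmem⟩ := (Ultrafilter.finite_biUnion_mem_iff H.finite_toSet).1 this
    exact ⟨⟨t, ht⟩, hmem⟩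
  choose c hc using hcol
  obtain ⟨p, t, hp⟩ := exists_apTerm_monochromatic c l
  have hu' : (⋂ i ∈ {i | i ≤ l}, {y | (t : S) + (apTerm i p + y) ∈ A}) ∈ u :=
    (biInter_mem (finite_le_nat l)).2 fun i hi => hp i hi ▸ hc _
  obtain ⟨x, hx⟩ := Ultrafilter.nonempty_of_mem hu'
  refine ⟨(t + x + p.1, p.2), fun i hi => ?_⟩
  rw [apTerm_add_fst, add_assoc, add_comm x]
  exact mem_iInter₂.1 hx i hi

end PiecewiseSyndetic

section Configuration

variable {S : Type*} [AddCommSemigroup S]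

theorem apConfig_mem_of_map_apTerm_eq {q : Ultrafilter (S × S)} {p : Ultrafilter S} {l : ℕ}
    (h : ∀ i ≤ l, Ultrafilter.map (apTerm i) q = p) {A : Set S} (hA : A ∈ p) :
    apConfig l A ∈ q := by
  have hA' : apConfig l A = ⋂ i ∈ {i | i ≤ l}, apTerm i ⁻¹' A := by
    ext
    simp [apConfig]
  rw [hA']
  exact (biInter_mem (finite_le_nat l)).2 fun i hi =>
    Ultrafilter.mem_map.1 (by rw [h i hi]; exact hA)

theorem exists_mem_map_apTerm_eq {Y : Set (Ultrafilter (S × S))} (hY : IsClosed Y)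
    (p : Ultrafilter S) (l : ℕ) (h : ∀ A ∈ p, ∃ q ∈ Y, apConfig l A ∈ q) :
    ∃ q ∈ Y, ∀ i ≤ l, Ultrafilter.map (apTerm i) q = p := by
  have : Nonempty {A // A ∈ p} := ⟨⟨univ, univ_mem⟩⟩
  obtain ⟨q, hqY, hq⟩ := Ultrafilter.exists_mem_forall_mem_of_directed hY
    (C := fun A : {A // A ∈ p} => apConfig l A.1)
    (fun A B => ⟨⟨A.1 ∩ B.1, inter_mem A.2 B.2⟩, apConfig_mono l inter_subset_left,
      apConfig_mono l inter_subset_right⟩)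
    fun A => h A.1 A.2
  exact ⟨q, hqY, fun i hi => Ultrafilter.coe_le_coe.1 fun A hA =>
    Ultrafilter.mem_map.2 (mem_of_superset (hq ⟨A, hA⟩) fun _ hx => hx i hi)⟩

theorem piecewiseSyndetic_apConfig {A : Set S} (hA : PiecewiseSyndetic A) (l : ℕ) :
    PiecewiseSyndetic (apConfig l A) := by
  obtain ⟨w, hwK, hAw⟩ := hA.exists_mem_smallestIdeal
  let φ : Ultrafilter (S × S) →ₙ+ (Fin (l + 1) → Ultrafilter S) :=
    AddHom.pi fun i => Ultrafilter.mapAddHom (apTerm i)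
  have hφ : Continuous φ := continuous_pi fun i => Ultrafilter.continuous_map _
  have hwφ : (fun _ => w) ∈ range φ := by
    obtain ⟨q, -, hq⟩ := exists_mem_map_apTerm_eq isClosed_univ w l fun B hB =>
      let ⟨x, hx⟩ := (piecewiseSyndetic_of_mem_smallestIdeal hwK hB).apConfig_nonempty l
      ⟨pure x, trivial, hx⟩
    exact ⟨q, funext fun i => hq i (Nat.lt_succ_iff.1 i.2)⟩
  obtain ⟨q, hqK, hq⟩ := φ.mem_image_smallestIdeal Ultrafilter.continuous_add_left
    (fun r : Fin (l + 1) → Ultrafilter S => continuous_pi fun i =>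
      (Ultrafilter.continuous_add_left (r i)).comp (continuous_apply i))
    hφ (const_mem_smallestIdeal_pi hwK (Fin (l + 1))) hwφ
  exact piecewiseSyndetic_of_mem_smallestIdeal hqK
    (apConfig_mem_of_map_apTerm_eq (fun i hi => congrFun hq ⟨i, Nat.lt_succ_of_le hi⟩) hAw)

theorem exists_idempotent_map_apTerm_eq {p : Ultrafilter S} (hp : p + p = p)
    (hpK : p ∈ closure (smallestIdeal (Ultrafilter S))) (l : ℕ) :
    ∃ q : Ultrafilter (S × S), q + q = q ∧
      q ∈ closure (smallestIdeal (Ultrafilter (S × S))) ∧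
      ∀ i ≤ l, Ultrafilter.map (apTerm i) q = p := by
  let Z := closure (smallestIdeal (Ultrafilter (S × S))) ∩
    {q | ∀ i ≤ l, Ultrafilter.map (apTerm i) q = p}
  have hZ : IsClosed Z := by
    refine isClosed_closure.inter ?_
    simp only [ofPred_forall]
    exact isClosed_iInter fun i => isClosed_iInter fun _ =>
      isClosed_eq (Ultrafilter.continuous_map _) continuous_const
  obtain ⟨q₀, hq₀⟩ := exists_mem_map_apTerm_eq isClosed_closure p l fun A hA =>
    let ⟨q, hqK, hq⟩ :=
      (piecewiseSyndetic_apConfig (piecewiseSyndetic_of_mem_closure_smallestIdeal hpK hA) l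
        ).exists_mem_smallestIdeal
    ⟨q, subset_closure hqK, hq⟩
  obtain ⟨q, hqZ, hqq⟩ := exists_idempotent_in_compact_add_subsemigroup
    Ultrafilter.continuous_add_left Z ⟨q₀, hq₀⟩ hZ.isCompact
    fun a ha b hb => ⟨add_mem_closure_smallestIdeal_left a hb.1, fun i hi => by
      rw [Ultrafilter.map_add, ha.2 i hi, hb.2 i hi, hp]⟩
  exact ⟨q, hqq, hqZ⟩

end Configuration

section QuasiCentral

/-- The set `A⋆` of Hindman–Strauss. -/
def idemCore {T : Type*} [AddSemigroup T] (q : Ultrafilter T) (A : Set T) : Set T :=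
  {x ∈ A | {y | x + y ∈ A} ∈ q}

section Semigroup

variable {T : Type*} [AddSemigroup T] {q : Ultrafilter T} {A : Set T}

theorem idemCore_subset : idemCore q A ⊆ A := fun _ hx => hx.1

theorem idemCore_mem (hq : q + q = q) (hA : A ∈ q) : idemCore q A ∈ q :=
  inter_mem hA (Ultrafilter.mem_add_iff.1 (hq.symm ▸ hA))

theorem translate_mem_of_mem_idemCore (hq : q + q = q) {x : T} (hx : x ∈ idemCore q A) :
    {y | x + y ∈ idemCore q A} ∈ q :=
  mem_of_superset (idemCore_mem hq hx.2) fun y hy =>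
    ⟨hy.1, mem_of_superset hy.2 fun z hz => by rwa [mem_ofPred_eq, add_assoc]⟩

end Semigroup

variable {T : Type*} [AddCommSemigroup T]

/-- Stage `n` imposes `-e j + C k` for all `j, k < n` with `e j ∈ C k`; as `e` enumerates `T`,
this eventually provides every translate that `QuasiCentral` asks for. -/
noncomputable def quasiCentralSeq (q : Ultrafilter T) (e : ℕ → T) (N : Set T) : ℕ → Set T :=
  Nat.strongRec fun n C => idemCore q (N ∩ ⋂ (k) (hk : k ∈ Finset.range n),
    (C k (Finset.mem_range.1 hk) ∩
      ⋂ j ∈ Finset.range n, {y | e j ∈ C k (Finset.mem_range.1 hk) →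
        e j + y ∈ C k (Finset.mem_range.1 hk)}))

variable {q : Ultrafilter T} {e : ℕ → T} {N : Set T}

theorem quasiCentralSeq_eq (n : ℕ) : quasiCentralSeq q e N n =
    idemCore q (N ∩ ⋂ k ∈ Finset.range n, (quasiCentralSeq q e N k ∩
      ⋂ j ∈ Finset.range n, {y | e j ∈ quasiCentralSeq q e N k →
        e j + y ∈ quasiCentralSeq q e N k})) := by
  rw [quasiCentralSeq, Nat.strongRec_eq]
  rfl

theorem quasiCentralSeq_subset_inter (n : ℕ) :
    quasiCentralSeq q e N n ⊆ N ∩ ⋂ k ∈ Finset.range n, (quasiCentralSeq q e N k ∩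
      ⋂ j ∈ Finset.range n, {y | e j ∈ quasiCentralSeq q e N k →
        e j + y ∈ quasiCentralSeq q e N k}) :=
  (quasiCentralSeq_eq n).le.trans idemCore_subset

theorem quasiCentralSeq_subset (n : ℕ) : quasiCentralSeq q e N n ⊆ N :=
  (quasiCentralSeq_subset_inter n).trans inter_subset_left

theorem quasiCentralSeq_subset_of_lt {k n : ℕ} (hk : k < n) :
    quasiCentralSeq q e N n ⊆ quasiCentralSeq q e N k := fun _ hy =>
  (mem_iInter₂.1 ((quasiCentralSeq_subset_inter n hy).2) k (Finset.mem_range.2 hk)).1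

theorem quasiCentralSeq_subset_translate {j k n : ℕ} (hj : j < n) (hk : k < n)
    (hjk : e j ∈ quasiCentralSeq q e N k) :
    quasiCentralSeq q e N n ⊆ {y | e j + y ∈ quasiCentralSeq q e N k} := fun _ hy =>
  mem_iInter₂.1 (mem_iInter₂.1 ((quasiCentralSeq_subset_inter n hy).2) k
    (Finset.mem_range.2 hk)).2 j (Finset.mem_range.2 hj) hjk

theorem quasiCentralSeq_mem (hq : q + q = q) (hN : N ∈ q) (n : ℕ) :
    quasiCentralSeq q e N n ∈ q := by
  induction n using Nat.strong_induction_on with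
  | _ n ih =>
    rw [quasiCentralSeq_eq]
    refine idemCore_mem hq (inter_mem hN ((biInter_finset_mem _).2 fun k hk =>
      inter_mem (ih k (Finset.mem_range.1 hk)) ((biInter_finset_mem _).2 fun j _ => ?_)))
    by_cases hjk : e j ∈ quasiCentralSeq q e N k
    · rw [quasiCentralSeq_eq] at hjk ⊢
      exact mem_of_superset (translate_mem_of_mem_idemCore hq hjk) fun _ hy _ => hy
    · exact univ_mem' fun _ h => absurd h hjk

theorem quasiCentral_of_idempotent [Countable T] (hq : q + q = q)
    (hqK : q ∈ closure (smallestIdeal (Ultrafilter T))) (hN : N ∈ q) : QuasiCentral N := by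
  have : Nonempty T := ⟨(q.nonempty_of_mem univ_mem).some⟩
  obtain ⟨e, he⟩ := exists_surjective_nat T
  refine ⟨quasiCentralSeq q e N, quasiCentralSeq_subset,
    fun n => quasiCentralSeq_subset_of_lt n.lt_succ_self,
    fun n => piecewiseSyndetic_of_mem_closure_smallestIdeal hqK (quasiCentralSeq_mem hq hN n),
    fun n x hx => ?_⟩
  obtain ⟨j, rfl⟩ := he x
  exact ⟨max j n + 1, quasiCentralSeq_subset_translate (by omega) (by omega) hx⟩

theorem QuasiCentral.exists_idempotent_mem_closure {M : Set T} (hM : QuasiCentral M) :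
    ∃ p : Ultrafilter T,
      p + p = p ∧ p ∈ closure (smallestIdeal (Ultrafilter T)) ∧ M ∈ p := by
  obtain ⟨C, hCM, hCdec, hCpws, hCshift⟩ := hM
  let Y := closure (smallestIdeal (Ultrafilter T)) ∩ {p | ∀ n, C n ∈ p}
  have hY : IsClosed Y := by
    refine isClosed_closure.inter ?_
    simp only [ofPred_forall]
    exact isClosed_iInter fun n => ultrafilter_isClosed_basic (C n)
  obtain ⟨p₀, hp₀⟩ := Ultrafilter.exists_mem_forall_mem_of_directed isClosed_closure
    (antitone_nat_of_succ_le hCdec).directed_ge fun n =>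
      let ⟨p, hpK, hp⟩ := (hCpws n).exists_mem_smallestIdeal
      ⟨p, subset_closure hpK, hp⟩
  have hYadd : ∀ p ∈ Y, ∀ r ∈ Y, p + r ∈ Y := fun p hp r hr =>
    ⟨add_mem_closure_smallestIdeal_left p hr.1, fun n => Ultrafilter.mem_add_iff.2 <|
      mem_of_superset (hp.2 n) fun x hx =>
        let ⟨m, hm⟩ := hCshift n x hx
        mem_of_superset (hr.2 m) hm⟩
  obtain ⟨p, hpY, hpp⟩ := exists_idempotent_in_compact_add_subsemigroup
    Ultrafilter.continuous_add_left Y ⟨p₀, hp₀⟩ hY.isCompact hYadd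
  exact ⟨p, hpp, hpY.1, mem_of_superset (hpY.2 0) (hCM 0)⟩

end QuasiCentral

theorem stmt_13_general {S : Type*} [AddCommSemigroup S] [Countable S]
    (M : Set S) (hM : QuasiCentral M) (l : ℕ) :
    QuasiCentral
      {p : S × S | p.1 ∈ M ∧ ∀ i < l, p.1 + itAdd i p.2 ∈ M} := by
  obtain ⟨p, hpp, hpK, hMp⟩ := hM.exists_idempotent_mem_closure
  obtain ⟨q, hqq, hqK, hqp⟩ := exists_idempotent_map_apTerm_eq hpp hpK l
  rw [← apConfig_eq_setOf]
  exact quasiCentral_of_idempotent hqq hqK (apConfig_mem_of_map_apTerm_eq hqp hMp)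

theorem stmt_13 {S : Type*} [AddCommSemigroup S] [Countable S]
    (hS : ∀ d : ℕ, 0 < d → PiecewiseSyndetic {x : S | ∃ s : S, x = itAdd (d - 1) s})
    (M : Set S) (hM : QuasiCentral M) (l : ℕ) :
    QuasiCentral
      {p : S × S | p.1 ∈ M ∧ ∀ i < l, p.1 + itAdd i p.2 ∈ M} :=
  stmt_13_general M hM l
end

section
/- Let S be a countable commutative semigroup with dS piecewise syndetic in S for all d, and M ⊆ S quasi-central. Then M^{l+1} ∩ AP^{l+1} is quasi-central in AP^{l+1}, where AP^{l+1} = {(a, a+b, ..., a+lb) : a,b ∈ S}. -/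
/-- The subsemigroup `AP^{l+1} = {(a, a+b, …, a+lb) : a, b ∈ S}` of `S^{l+1}`. -/
def APsub (S : Type*) [AddCommSemigroup S] (l : ℕ) :
    AddSubsemigroup (Fin (l + 1) → S) where
  carrier := {f | ∃ a b : S, f 0 = a ∧ ∀ i : Fin l, f i.succ = f i.castSucc + b}
  add_mem' := by
    rintro f g ⟨a, b, hf0, hf⟩ ⟨a', b', hg0, hg⟩
    refine ⟨a + a', b + b', by simp [hf0, hg0], fun i => ?_⟩
    simp only [Pi.add_apply, hf i, hg i]
    exact add_add_add_comm _ _ _ _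


open Set Filter

attribute [local instance] Ultrafilter.add Ultrafilter.addSemigroup

set_option linter.unusedSectionVars false

namespace QC14


section Alg

variable {X : Type*} [AddSemigroup X] [TopologicalSpace X] [CompactSpace X] [T2Space X]

/-- Closed left ideal of a set `T`. -/
def LId (T L : Set X) : Prop :=
  L.Nonempty ∧ L ⊆ T ∧ IsClosed L ∧ ∀ x ∈ T, ∀ y ∈ L, x + y ∈ L

/-- Minimal closed left ideal of `T`. -/
def MinL (T L : Set X) : Prop := LId T L ∧ ∀ L', LId T L' → L' ⊆ L → L' = L

/-- Union of the minimal closed left ideals of `T`. -/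
def KK (T : Set X) : Set X := {x | ∃ L, MinL T L ∧ x ∈ L}

/-- Compact (closed, nonempty) subsemigroup. -/
def SubSG (T : Set X) : Prop := T.Nonempty ∧ IsClosed T ∧ ∀ x ∈ T, ∀ y ∈ T, x + y ∈ T

lemma subSG_univ [Nonempty X] : SubSG (univ : Set X) :=
  ⟨univ_nonempty, isClosed_univ, fun _ _ _ _ => trivial⟩

lemma exists_minL {T L₀ : Set X} (h0 : LId T L₀) : ∃ L, L ⊆ L₀ ∧ MinL T L := by
  have hz : ∀ c ⊆ {L | LId T L ∧ L ⊆ L₀}, IsChain (· ⊆ ·) c → c.Nonempty →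
      ∃ lb ∈ {L | LId T L ∧ L ⊆ L₀}, ∀ s ∈ c, lb ⊆ s := by
    intro c hcS hchain hcne
    have hne : (⋂₀ c).Nonempty := by
      haveI : Nonempty c := hcne.coe_sort
      exact IsCompact.nonempty_sInter_of_directed_nonempty_isCompact_isClosed
        (IsChain.directedOn hchain.symm) (fun U hU => (hcS hU).1.1)
        (fun U hU => (hcS hU).1.2.2.1.isCompact) (fun U hU => (hcS hU).1.2.2.1)
    obtain ⟨U₀, hU₀⟩ := hcne
    refine ⟨⋂₀ c, ⟨⟨hne, ?_, isClosed_sInter fun t ht => (hcS ht).1.2.2.1, ?_⟩, ?_⟩,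
      fun s hs => sInter_subset_of_mem hs⟩
    · exact (sInter_subset_of_mem hU₀).trans (hcS hU₀).1.2.1
    · intro x hx y hy
      exact mem_sInter.2 fun U hU => (hcS hU).1.2.2.2 x hx y (mem_sInter.1 hy U hU)
    · exact (sInter_subset_of_mem hU₀).trans (hcS hU₀).2
  obtain ⟨m, hm0, hmin⟩ := zorn_superset_nonempty {L | LId T L ∧ L ⊆ L₀} hz L₀ ⟨h0, subset_rfl⟩
  refine ⟨m, hmin.prop.2, hmin.prop.1, fun L' h1 h2 => subset_antisymm h2 ?_⟩
  exact hmin.2 ⟨h1, h2.trans hmin.prop.2⟩ h2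

variable (hc : ∀ y : X, Continuous (· + y))
include hc

lemma minL_image {T L : Set X} (hT : SubSG T) (hL : MinL T L) {z : X} (hz : z ∈ L) :
    (· + z) '' T = L := by
  apply hL.2
  · refine ⟨hT.1.image _, ?_, ((hT.2.1.isCompact).image (hc z)).isClosed, ?_⟩
    · rintro _ ⟨x, hx, rfl⟩
      exact hT.2.2 x hx z (hL.1.2.1 hz)
    · rintro x hx _ ⟨t, ht, rfl⟩
      exact ⟨x + t, hT.2.2 x hx t ht, by dsimp only; rw [add_assoc]⟩
  · rintro _ ⟨x, hx, rfl⟩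
    exact hL.1.2.2.2 x hx z hz

lemma self_mem_add_image {T L : Set X} (hT : SubSG T) (hL : MinL T L) {z : X} (hz : z ∈ L) :
    ∃ u ∈ T, u + z = z := by
  have h := minL_image hc hT hL hz
  have h2 : z ∈ (· + z) '' T := h.symm ▸ hz
  obtain ⟨u, hu, huz⟩ := h2
  exact ⟨u, hu, huz⟩

variable [Nonempty X]

lemma minL_add_right {L : Set X} (hL : MinL (univ : Set X) L) (x : X) :
    MinL (univ : Set X) ((· + x) '' L) := by
  constructor
  · refine ⟨hL.1.1.image _, subset_univ _, ((hL.1.2.2.1.isCompact).image (hc x)).isClosed, ?_⟩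
    rintro u - _ ⟨y, hy, rfl⟩
    exact ⟨u + y, hL.1.2.2.2 u trivial y hy, by dsimp only; rw [add_assoc]⟩
  · intro L' hL' hsub
    obtain ⟨m, hm⟩ := hL'.1
    obtain ⟨y, hy, rfl⟩ := hsub hm
    have h1 : (· + (y + x)) '' univ ⊆ L' := by
      rintro _ ⟨u, -, rfl⟩
      exact hL'.2.2.2 u trivial _ hm
    have h2 : (· + (y + x)) '' univ = (· + x) '' L := by
      have h3 : (· + y) '' (univ : Set X) = L := minL_image hc subSG_univ hL hy
      rw [← h3, image_image]
      exact image_congr fun a _ => by rw [add_assoc]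
    exact subset_antisymm hsub (h2 ▸ h1)

lemma KK_subset_ideal {T J : Set X} (hT : SubSG T) (hJne : J.Nonempty) (hJT : J ⊆ T)
    (hJl : ∀ x ∈ T, ∀ j ∈ J, x + j ∈ J) (hJr : ∀ j ∈ J, ∀ x ∈ T, j + x ∈ J) :
    KK T ⊆ J := by
  rintro x ⟨L, hL, hxL⟩
  obtain ⟨j, hj⟩ := hJne
  have hxT : x ∈ T := hL.1.2.1 hxL
  have he1 : j + x ∈ L := by
    rw [← minL_image hc hT hL hxL]
    exact ⟨j, hJT hj, rfl⟩
  have he2 : j + x ∈ J := hJr j hj x hxT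
  have h := minL_image hc hT hL he1
  rw [← h] at hxL
  obtain ⟨t, ht, hteq⟩ := hxL
  dsimp only at hteq
  rw [← hteq]
  exact hJl t ht _ he2

lemma mem_KK_of_univ {T : Set X} (hT : SubSG T) {x : X} (hxT : x ∈ T)
    (hx : x ∈ KK (univ : Set X)) : x ∈ KK T := by
  obtain ⟨L, hL, hxL⟩ := hx
  have hTL : LId T (T ∩ L) :=
    ⟨⟨x, hxT, hxL⟩, inter_subset_left, hT.2.1.inter hL.1.2.2.1,
      fun a ha y hy => ⟨hT.2.2 a ha y hy.1, hL.1.2.2.2 a trivial y hy.2⟩⟩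
  obtain ⟨L'', hsub, hL''⟩ := exists_minL hTL
  obtain ⟨e, heL, he⟩ := exists_idempotent_in_compact_add_subsemigroup hc L'' hL''.1.1
    hL''.1.2.2.1.isCompact (fun a ha b hb => hL''.1.2.2.2 a ((hsub ha).1) b hb)
  have heLL : e ∈ L := (hsub heL).2
  have himg : (· + e) '' (univ : Set X) = L := minL_image hc subSG_univ hL heLL
  have h2 : x ∈ (· + e) '' (univ : Set X) := himg.symm ▸ hxL
  obtain ⟨u, -, hux⟩ := h2
  dsimp only at hux
  have hxe : x + e = x := by
    rw [← hux, add_assoc, he]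
  have h3 : x + e ∈ L'' := hL''.1.2.2.2 x hxT e heL
  rw [hxe] at h3
  exact ⟨L'', hL'', h3⟩

lemma KK_nonempty {T : Set X} (hT : SubSG T) : (KK T).Nonempty := by
  obtain ⟨L, -, hL⟩ := exists_minL (T := T) (L₀ := T) ⟨hT.1, subset_rfl, hT.2.1, hT.2.2⟩
  obtain ⟨x, hx⟩ := hL.1.1
  exact ⟨x, L, hL, hx⟩

lemma KK_univ_add_left {x : X} (hx : x ∈ KK (univ : Set X)) (u : X) : u + x ∈ KK univ := by
  obtain ⟨L, hL, hxL⟩ := hx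
  exact ⟨L, hL, hL.1.2.2.2 u trivial x hxL⟩

lemma KK_univ_add_right {x : X} (hx : x ∈ KK (univ : Set X)) (u : X) : x + u ∈ KK univ := by
  obtain ⟨L, hL, hxL⟩ := hx
  exact ⟨(· + u) '' L, minL_add_right hc hL u, ⟨x, hxL, rfl⟩⟩

lemma minL_pi {ι : Type*} {L : Set X} (hL : MinL (univ : Set X) L) :
    MinL (univ : Set (ι → X)) {f | ∀ i, f i ∈ L} := by
  constructor
  · refine ⟨?_, subset_univ _, ?_, ?_⟩
    · obtain ⟨z, hz⟩ := hL.1.1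
      exact ⟨fun _ => z, fun _ => hz⟩
    · have h : {f : ι → X | ∀ i, f i ∈ L} = ⋂ i, (fun f : ι → X => f i) ⁻¹' L := by
        ext f; simp
      rw [h]
      exact isClosed_iInter fun i => hL.1.2.2.1.preimage (continuous_apply i)
    · intro f _ g hg i
      exact hL.1.2.2.2 (f i) trivial (g i) (hg i)
  · intro L' hL' hsub
    obtain ⟨m, hm⟩ := hL'.1
    refine subset_antisymm hsub ?_
    intro g hg
    have h : ∀ i, ∃ u, u + m i = g i := by
      intro i
      have himg : (· + m i) '' (univ : Set X) = L := minL_image hc subSG_univ hL (hsub hm i)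
      have h2 : g i ∈ (· + m i) '' (univ : Set X) := himg.symm ▸ hg i
      obtain ⟨u, -, hu⟩ := h2
      exact ⟨u, hu⟩
    choose u hu using h
    have h4 : u + m = g := funext fun i => hu i
    rw [← h4]
    exact hL'.2.2.2 u trivial m hm

end Alg

section Ult

variable {G : Type*} [AddSemigroup G]

lemma umem_add {A : Set G} {p q : Ultrafilter G} :
    A ∈ p + q ↔ {a | {b | a + b ∈ A} ∈ q} ∈ p := by
  have h := Ultrafilter.eventually_add p q (· ∈ A)
  simp only [eventually_iff, Ultrafilter.mem_coe, setOf_mem_eq] at h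
  exact h

lemma uext {p q : Ultrafilter G} (h : ∀ A : Set G, A ∈ p ↔ A ∈ q) : p = q :=
  Ultrafilter.coe_inj.1 (Filter.ext fun A => by
    simpa only [Ultrafilter.mem_coe] using h A)

lemma pure_add_pure' (a b : G) : (pure a : Ultrafilter G) + pure b = pure (a + b) := by
  apply uext
  intro A
  simp [umem_add]

lemma continuous_umap {H : Type*} (f : G → H) :
    Continuous (Ultrafilter.map f) := by
  refine ultrafilterBasis_is_basis.continuous_iff.2 <| Set.forall_mem_range.mpr fun A => ?_
  have h : Ultrafilter.map f ⁻¹' {u | A ∈ u} = {p | f ⁻¹' A ∈ p} := by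
    ext p
    simp [Ultrafilter.mem_map]
  rw [h]
  exact ultrafilter_isOpen_basic _

lemma umap_add {H : Type*} [AddSemigroup H] (f : G → H)
    (hf : ∀ a b, f (a + b) = f a + f b) (p q : Ultrafilter G) :
    (p + q).map f = p.map f + q.map f := by
  apply uext
  intro A
  rw [umem_add, Ultrafilter.mem_map, umem_add]
  have h : (f ⁻¹' {a | {b | a + b ∈ A} ∈ Ultrafilter.map f q}) =
      {a | {b | a + b ∈ f ⁻¹' A} ∈ q} := by
    ext a
    simp only [mem_preimage, mem_setOf_eq, Ultrafilter.mem_map]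
    have h2 : (fun b => a + b) ⁻¹' (f ⁻¹' A) = f ⁻¹' {b | f a + b ∈ A} := by
      ext b
      simp [hf]
    constructor
    · intro h'
      have := q.map f |>.toFilter
      show (fun b => a + b) ⁻¹' (f ⁻¹' A) ∈ q
      rw [h2]
      exact h'
    · intro h'
      show f ⁻¹' {b | f a + b ∈ A} ∈ q
      rw [← h2]
      exact h'
  have hmm := Ultrafilter.mem_map (m := f) (f := p)
    (s := {a | {b | a + b ∈ A} ∈ Ultrafilter.map f q})
  rw [hmm, h]

end Ult

section UltComm

variable {G : Type*} [AddCommSemigroup G] [Nonempty G]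

lemma ps_of_memKK {L : Set (Ultrafilter G)} (hL : MinL (univ : Set (Ultrafilter G)) L)
    {k : Ultrafilter G} (hk : k ∈ L) {B : Set G} (hB : B ∈ k) : PiecewiseSyndetic B := by
  classical
  set B' : Set G := {x | {y | x + y ∈ B} ∈ k} with hB'def
  by_cases hsyn : ∃ F : Finset G, ∀ x : G, ∃ t ∈ F, t + x ∈ B'
  · obtain ⟨F, hF⟩ := hsyn
    refine ⟨F, fun F' => ?_⟩
    choose t ht1 ht2 using hF
    have hmem : (⋂ f ∈ (F' : Set G), {y | (t f + f) + y ∈ B}) ∈ k := by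
      refine (Filter.biInter_mem F'.finite_toSet).2 fun f _ => ?_
      exact ht2 f
    obtain ⟨x, hx⟩ := Ultrafilter.nonempty_of_mem hmem
    refine ⟨x, fun f hf => ?_⟩
    have hxf : (t f + f) + x ∈ B := mem_iInter₂.1 hx f (by exact_mod_cast hf)
    exact ⟨t f, ht1 f, by rwa [← add_assoc]⟩
  · push_neg at hsyn
    have hfip : ∀ T : Finset (Set G), (↑T : Set (Set G)) ⊆ {D | ∃ t : G, D = {y | t + y ∉ B'}} →
        (⋂₀ (↑T : Set (Set G))).Nonempty := by
      intro T hT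
      set g : Set G → G := fun D => if h : ∃ t : G, D = {y | t + y ∉ B'} then h.choose
        else Classical.arbitrary G with hg
      obtain ⟨x, hx⟩ := hsyn (T.image g)
      refine ⟨x, ?_⟩
      rw [mem_sInter]
      intro D hD
      have hex : ∃ t : G, D = {y | t + y ∉ B'} := hT hD
      have hspec : D = {y | g D + y ∉ B'} := by
        rw [hg]
        dsimp only
        rw [dif_pos hex]
        exact hex.choose_spec
      rw [hspec]
      exact hx (g D) (Finset.mem_image_of_mem g hD)
    obtain ⟨q, hq⟩ := Ultrafilter.exists_ultrafilter_of_finite_inter_nonempty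
      {D | ∃ t : G, D = {y | t + y ∉ B'}} hfip
    exfalso
    have h1 : q + k ∈ L := hL.1.2.2.2 q trivial k hk
    have h2 : (· + (q + k)) '' (univ : Set (Ultrafilter G)) = L :=
      minL_image (fun y => Ultrafilter.continuous_add_left y) subSG_univ hL h1
    have h3 : k ∈ (· + (q + k)) '' (univ : Set (Ultrafilter G)) := h2.symm ▸ hk
    obtain ⟨v, -, hv⟩ := h3
    dsimp only at hv
    rw [← hv, umem_add] at hB
    obtain ⟨x, hx⟩ := Ultrafilter.nonempty_of_mem hB
    rw [mem_setOf_eq, umem_add] at hx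
    have hx2 : {y | x + y ∈ B'} ∈ q := by
      have h4 : {a : G | {b | a + b ∈ {b' | x + b' ∈ B}} ∈ k} = {y | x + y ∈ B'} := by
        ext y
        simp only [mem_setOf_eq, hB'def]
        have h5 : {b | x + (y + b) ∈ B} = {b | (x + y) + b ∈ B} := by
          ext b
          simp only [mem_setOf_eq]
          rw [add_assoc]
        rw [h5]
      rw [← h4]
      exact hx
    have hx3 : {y | x + y ∉ B'} ∈ q := hq (by exact ⟨x, rfl⟩)
    have h6 : ({y | x + y ∈ B'} ∩ {y | x + y ∉ B'} : Set G) ∈ q := inter_mem hx2 hx3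
    obtain ⟨y, hy1, hy2⟩ := Ultrafilter.nonempty_of_mem h6
    exact hy2 hy1

lemma exists_KK_of_ps {B : Set G} (hB : PiecewiseSyndetic B) :
    ∃ k : Ultrafilter G, k ∈ KK (univ : Set (Ultrafilter G)) ∧ B ∈ k := by
  classical
  obtain ⟨F, hT⟩ := hB
  set T : Set G := {s | ∃ t ∈ F, t + s ∈ B} with hTdef
  have hfip : ∀ T' : Finset (Set G), (↑T' : Set (Set G)) ⊆ {D | ∃ s : G, D = {x | s + x ∈ T}} →
      (⋂₀ (↑T' : Set (Set G))).Nonempty := by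
    intro T' hT'
    set g : Set G → G := fun D => if h : ∃ s : G, D = {x | s + x ∈ T} then h.choose
      else Classical.arbitrary G with hg
    obtain ⟨x, hx⟩ := hT (T'.image g)
    refine ⟨x, ?_⟩
    rw [mem_sInter]
    intro D hD
    have hex : ∃ s : G, D = {x | s + x ∈ T} := hT' hD
    have hspec : D = {y | g D + y ∈ T} := by
      rw [hg]
      dsimp only
      rw [dif_pos hex]
      exact hex.choose_spec
    rw [hspec]
    exact hx (g D) (Finset.mem_image_of_mem g hD)
  obtain ⟨q₀, hq₀⟩ := Ultrafilter.exists_ultrafilter_of_finite_inter_nonempty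
    {D | ∃ s : G, D = {x | s + x ∈ T}} hfip
  have hL₀ : LId (univ : Set (Ultrafilter G)) ((· + q₀) '' univ) := by
    refine ⟨(univ_nonempty).image _, subset_univ _,
      (isCompact_univ.image (Ultrafilter.continuous_add_left q₀)).isClosed, ?_⟩
    rintro u - _ ⟨v, -, rfl⟩
    exact ⟨u + v, trivial, by dsimp only; rw [add_assoc]⟩
  obtain ⟨L, hLsub, hL⟩ := exists_minL hL₀
  obtain ⟨r, hr⟩ := hL.1.1
  have hTr : T ∈ r := by
    obtain ⟨u, -, hur⟩ := hLsub hr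
    dsimp only at hur
    rw [← hur, umem_add]
    have : {a : G | {x | a + x ∈ T} ∈ q₀} = univ := by
      refine eq_univ_of_forall fun s => ?_
      exact hq₀ ⟨s, rfl⟩
    rw [this]
    exact univ_mem
  have hTun : T = ⋃ t ∈ (F : Set G), {s | t + s ∈ B} := by
    ext s
    simp [hTdef]
  rw [hTun] at hTr
  have := (Ultrafilter.finite_biUnion_mem_iff F.finite_toSet).1 hTr
  obtain ⟨t, -, htB⟩ := this
  refine ⟨pure t + r, ⟨L, hL, hL.1.2.2.2 (pure t) trivial r hr⟩, ?_⟩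
  rw [umem_add]
  exact Ultrafilter.mem_pure.2 htB

lemma ps_mono {A B : Set G} (hAB : A ⊆ B) (hA : PiecewiseSyndetic A) :
    PiecewiseSyndetic B := by
  obtain ⟨F, hF⟩ := hA
  refine ⟨F, fun F' => ?_⟩
  obtain ⟨x, hx⟩ := hF F'
  refine ⟨x, fun f hf => ?_⟩
  obtain ⟨t, ht, htm⟩ := hx f hf
  exact ⟨t, ht, hAB htm⟩

end UltComm

section AP

variable {S : Type*} [AddCommSemigroup S]

/-- `vecF a b k = a + k·b`. -/
def vecF (a b : S) : ℕ → S
  | 0 => a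
  | k + 1 => vecF a b k + b

lemma vecF_add (a b a' b' : S) (k : ℕ) :
    vecF (a + a') (b + b') k = vecF a b k + vecF a' b' k := by
  induction k with
  | zero => rfl
  | succ k ih =>
      show vecF (a + a') (b + b') k + (b + b') = (vecF a b k + b) + (vecF a' b' k + b')
      rw [ih, add_add_add_comm]

lemma vecF_left (s a b : S) (k : ℕ) : vecF (s + a) b k = s + vecF a b k := by
  induction k with
  | zero => rfl
  | succ k ih =>
      show vecF (s + a) b k + b = s + (vecF a b k + b)
      rw [ih, add_assoc]

lemma vecF_right (a s b : S) (k : ℕ) : vecF (a + s) b k = vecF a b k + s := by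
  rw [add_comm a s, vecF_left, add_comm]

/-- The coordinate map `π_k (a,b) = a + k·b`. -/
def pik (k : ℕ) : S × S → S := fun ab => vecF ab.1 ab.2 k

lemma pik_add (k : ℕ) (x y : S × S) : pik k (x + y) = pik k x + pik k y := by
  show vecF (x.1 + y.1) (x.2 + y.2) k = vecF x.1 x.2 k + vecF y.1 y.2 k
  exact vecF_add _ _ _ _ _

/-- The set of pairs all of whose progression terms lie in `C`. -/
def Wset (l : ℕ) (C : Set S) : Set (S × S) := {ab | ∀ k ≤ l, vecF ab.1 ab.2 k ∈ C}

lemma umem_bind {α β : Type*} {f : Ultrafilter α} {m : α → Ultrafilter β} {s : Set β} :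
    s ∈ f.bind m ↔ {a | s ∈ m a} ∈ f := Iff.rfl

/-- The joint extension map `β(S×S) → (βS)^{l+1}`. -/
def Itmap (l : ℕ) (r : Ultrafilter (S × S)) : Fin (l + 1) → Ultrafilter S :=
  fun i => r.map (pik i.val)

lemma Itmap_apply (l : ℕ) (r : Ultrafilter (S × S)) (i : Fin (l + 1)) :
    Itmap l r i = r.map (pik i.val) := rfl

/-- The diagonal map `βS → (βS)^{l+1}`. -/
def Dmap (l : ℕ) (v : Ultrafilter S) : Fin (l + 1) → Ultrafilter S := fun _ => v

lemma Dmap_apply (l : ℕ) (v : Ultrafilter S) (i : Fin (l + 1)) : Dmap l v i = v := rfl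

lemma Itmap_add (l : ℕ) (r r' : Ultrafilter (S × S)) :
    Itmap l (r + r') = Itmap l r + Itmap l r' := by
  funext i
  rw [Pi.add_apply, Itmap_apply, Itmap_apply, Itmap_apply]
  exact umap_add (pik i.val) (pik_add i.val) r r'

lemma Dmap_add (l : ℕ) (v w : Ultrafilter S) :
    Dmap l v + Dmap l w = Dmap l (v + w) := by
  funext i
  rw [Pi.add_apply, Dmap_apply, Dmap_apply, Dmap_apply]

lemma Itmap_cont (l : ℕ) : Continuous (Itmap (S := S) l) :=
  continuous_pi fun _ => continuous_umap _

lemma habs1 (l : ℕ) (v : Ultrafilter S) (r : Ultrafilter (S × S)) :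
    Dmap l v + Itmap l r = Itmap l (v.bind fun s => r.map fun ab => (s + ab.1, ab.2)) := by
  funext i
  rw [Pi.add_apply, Dmap_apply, Itmap_apply, Itmap_apply]
  apply uext
  intro A
  have hset : ∀ s : S, ((fun ab : S × S => (s + ab.1, ab.2)) ⁻¹' (pik i.val ⁻¹' A))
      = pik i.val ⁻¹' {b | s + b ∈ A} := by
    intro s
    ext ab
    simp only [mem_preimage, mem_setOf_eq, pik]
    rw [vecF_left]
  rw [umem_add, Ultrafilter.mem_map, umem_bind]
  have h1 : {a | {b | a + b ∈ A} ∈ Ultrafilter.map (pik i.val) r}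
      = {s | pik i.val ⁻¹' A ∈ Ultrafilter.map (fun ab : S × S => (s + ab.1, ab.2)) r} := by
    ext s
    rw [mem_setOf_eq, mem_setOf_eq, Ultrafilter.mem_map, Ultrafilter.mem_map, hset s]
  rw [h1]

lemma habs2 (l : ℕ) (r : Ultrafilter (S × S)) (v : Ultrafilter S) :
    Itmap l r + Dmap l v = Itmap l (r.bind fun ab => v.map fun s => (ab.1 + s, ab.2)) := by
  funext i
  rw [Pi.add_apply, Dmap_apply, Itmap_apply, Itmap_apply]
  apply uext
  intro A
  rw [umem_add, Ultrafilter.mem_map, Ultrafilter.mem_map, umem_bind]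
  have h1 : (pik i.val ⁻¹' {a | {b | a + b ∈ A} ∈ v} : Set (S × S))
      = {ab | pik i.val ⁻¹' A ∈ Ultrafilter.map (fun s => (ab.1 + s, ab.2)) v} := by
    ext ab
    rw [mem_preimage, mem_setOf_eq, mem_setOf_eq, Ultrafilter.mem_map]
    have h2 : ((fun s => (ab.1 + s, ab.2)) ⁻¹' (pik i.val ⁻¹' A) : Set S)
        = {b | pik i.val ab + b ∈ A} := by
      ext s
      simp only [mem_preimage, mem_setOf_eq, pik]
      rw [vecF_right]
    rw [h2]
  rw [h1]

lemma W_ps [Nonempty S] (l : ℕ) {C : Set S} (hC : PiecewiseSyndetic C) :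
    PiecewiseSyndetic (Wset l C) := by
  classical
  obtain ⟨k0, hk0K, hk0C⟩ := exists_KK_of_ps hC
  have hEclosed : IsClosed (Set.range (Itmap (S := S) l)) := by
    rw [← image_univ]
    exact (isCompact_univ.image (Itmap_cont l)).isClosed
  have hEne : (Set.range (Itmap (S := S) l)).Nonempty := range_nonempty _
  have hΔcont : Continuous (Dmap (S := S) l) := continuous_pi fun _ => continuous_id
  have hcY : ∀ y : Fin (l + 1) → Ultrafilter S, Continuous (· + y) := fun y =>
    continuous_pi fun i => (Ultrafilter.continuous_add_left (y i)).comp (continuous_apply i)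
  have hcU : ∀ y : Ultrafilter S, Continuous (· + y) := fun y =>
    Ultrafilter.continuous_add_left y
  have hcU2 : ∀ y : Ultrafilter (S × S), Continuous (· + y) := fun y =>
    Ultrafilter.continuous_add_left y
  have hEhSG : SubSG (Set.range (Itmap (S := S) l) ∪ Set.range (Dmap (S := S) l)) := by
    refine ⟨hEne.mono subset_union_left, hEclosed.union ?_, ?_⟩
    · rw [← image_univ]
      exact (isCompact_univ.image hΔcont).isClosed
    · rintro x hx y hy
      rcases hx with hx | hx
      · obtain ⟨r, rfl⟩ := hx
        rcases hy with hy | hy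
        · obtain ⟨r', rfl⟩ := hy
          exact Or.inl ⟨r + r', Itmap_add l r r'⟩
        · obtain ⟨v, rfl⟩ := hy
          exact Or.inl ⟨_, (habs2 l r v).symm⟩
      · obtain ⟨v, rfl⟩ := hx
        rcases hy with hy | hy
        · obtain ⟨r, rfl⟩ := hy
          exact Or.inl ⟨_, (habs1 l v r).symm⟩
        · obtain ⟨w, rfl⟩ := hy
          exact Or.inr ⟨v + w, (Dmap_add l v w).symm⟩
  obtain ⟨L, hLmin, hk0L⟩ := hk0K
  have hδKK : Dmap l k0 ∈ KK (univ : Set (Fin (l + 1) → Ultrafilter S)) :=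
    ⟨{f | ∀ i, f i ∈ L}, minL_pi hcU hLmin, fun _ => hk0L⟩
  have h1 : Dmap l k0 ∈ KK (Set.range (Itmap (S := S) l) ∪ Set.range (Dmap (S := S) l)) :=
    mem_KK_of_univ hcY hEhSG (Or.inr ⟨k0, rfl⟩) hδKK
  have h2 : Dmap l k0 ∈ Set.range (Itmap (S := S) l) := by
    refine KK_subset_ideal hcY hEhSG hEne subset_union_left ?_ ?_ h1
    · rintro x hx _ ⟨r, rfl⟩
      rcases hx with hx | hx
      · obtain ⟨r', rfl⟩ := hx
        exact ⟨r' + r, Itmap_add l r' r⟩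
      · obtain ⟨v, rfl⟩ := hx
        exact ⟨_, (habs1 l v r).symm⟩
    · rintro _ ⟨r, rfl⟩ x hx
      rcases hx with hx | hx
      · obtain ⟨r', rfl⟩ := hx
        exact ⟨r + r', Itmap_add l r r'⟩
      · obtain ⟨v, rfl⟩ := hx
        exact ⟨_, (habs2 l r v).symm⟩
  have hESG : SubSG (Set.range (Itmap (S := S) l)) := by
    refine ⟨hEne, hEclosed, ?_⟩
    rintro _ ⟨r, rfl⟩ _ ⟨r', rfl⟩
    exact ⟨r + r', Itmap_add l r r'⟩
  have h3 : Dmap l k0 ∈ KK (Set.range (Itmap (S := S) l)) :=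
    mem_KK_of_univ hcY hESG h2 hδKK
  have hKK2ne : (KK (univ : Set (Ultrafilter (S × S)))).Nonempty :=
    KK_nonempty hcU2 subSG_univ
  have h4 : Dmap l k0 ∈ Itmap l '' KK (univ : Set (Ultrafilter (S × S))) := by
    refine KK_subset_ideal hcY hESG (hKK2ne.image _)
      (image_subset_range _ _) ?_ ?_ h3
    · rintro x hx _ ⟨j, hj, rfl⟩
      obtain ⟨r, rfl⟩ := hx
      exact ⟨r + j, KK_univ_add_left hcU2 hj r, Itmap_add l r j⟩
    · rintro _ ⟨j, hj, rfl⟩ x hx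
      obtain ⟨r, rfl⟩ := hx
      exact ⟨j + r, KK_univ_add_right hcU2 hj r, Itmap_add l j r⟩
  obtain ⟨r, hrKK, hrI⟩ := h4
  have hcoord : ∀ i : Fin (l + 1), Ultrafilter.map (pik i.val) r = k0 :=
    fun i => congrFun hrI i
  have hW : Wset l C ∈ r := by
    have hsub2 : ∀ m ∈ Set.Iic l, (pik m ⁻¹' C : Set (S × S)) ∈ r := by
      intro m hm
      have h5 := hcoord ⟨m, Nat.lt_succ_of_le hm⟩
      have h6 : C ∈ Ultrafilter.map (pik m) r := h5.symm ▸ hk0C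
      exact Ultrafilter.mem_map.1 h6
    have heq : Wset l C = ⋂ m ∈ Set.Iic l, (pik m ⁻¹' C : Set (S × S)) := by
      ext ab
      simp only [Wset, mem_setOf_eq, mem_iInter, mem_preimage, Set.mem_Iic, pik]
    rw [heq]
    exact (Filter.biInter_mem (Set.finite_Iic l)).2 hsub2
  obtain ⟨L2, hL2, hrL2⟩ := hrKK
  exact ps_of_memKK hL2 hrL2 hW

end AP

section Transfer

lemma ps_image {G H : Type*} [AddCommSemigroup G] [AddCommSemigroup H] (φ : G → H)
    (hhom : ∀ a b, φ (a + b) = φ a + φ b) (hsurj : Function.Surjective φ)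
    {A : Set G} (hA : PiecewiseSyndetic A) : PiecewiseSyndetic (φ '' A) := by
  classical
  obtain ⟨F, hF⟩ := hA
  refine ⟨F.image φ, fun F' => ?_⟩
  obtain ⟨x, hx⟩ := hF (F'.image (Function.surjInv hsurj))
  refine ⟨φ x, fun f hf => ?_⟩
  obtain ⟨t, ht, htm⟩ := hx (Function.surjInv hsurj f) (Finset.mem_image_of_mem _ hf)
  refine ⟨φ t, Finset.mem_image_of_mem φ ht, ?_⟩
  have h1 : φ (t + (Function.surjInv hsurj f + x)) ∈ φ '' A := ⟨_, htm, rfl⟩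
  have h2 : φ (t + (Function.surjInv hsurj f + x)) = φ t + (f + φ x) := by
    rw [hhom, hhom, Function.surjInv_eq hsurj f]
  rwa [h2] at h1

variable {S : Type*} [AddCommSemigroup S]

/-- The canonical surjection `S × S → AP^{l+1}`. -/
def phiAP (l : ℕ) (ab : S × S) : APsub S l :=
  ⟨fun i => vecF ab.1 ab.2 i.val,
    ⟨ab.1, ab.2,
      by show vecF ab.1 ab.2 ((0 : Fin (l + 1)) : ℕ) = ab.1; rw [Fin.val_zero]; rfl,
      fun i => by
        show vecF ab.1 ab.2 (i.succ : ℕ) = vecF ab.1 ab.2 (i.castSucc : ℕ) + ab.2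
        rw [Fin.val_succ, Fin.coe_castSucc]; rfl⟩⟩

lemma phiAP_coe (l : ℕ) (ab : S × S) (i : Fin (l + 1)) :
    (phiAP l ab : Fin (l + 1) → S) i = vecF ab.1 ab.2 i.val := rfl

lemma phiAP_add (l : ℕ) (x y : S × S) :
    phiAP l (x + y) = phiAP l x + phiAP l y := by
  apply Subtype.ext
  funext i
  show vecF (x.1 + y.1) (x.2 + y.2) i.val = vecF x.1 x.2 i.val + vecF y.1 y.2 i.val
  exact vecF_add _ _ _ _ _

lemma phiAP_surj (l : ℕ) : Function.Surjective (phiAP (S := S) l) := by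
  rintro ⟨f, hf⟩
  obtain ⟨a, b, h0, hrec⟩ := hf
  refine ⟨(a, b), Subtype.ext (funext fun i => ?_)⟩
  show vecF a b i.val = f i
  induction i using Fin.induction with
  | zero => rw [Fin.val_zero]; exact h0.symm
  | succ i ih =>
      rw [Fin.coe_castSucc] at ih
      rw [Fin.val_succ]
      show vecF a b i.val + b = f i.succ
      rw [hrec i, ← ih]

end Transfer

end QC14

theorem stmt_14 {S : Type*} [AddCommSemigroup S] [Countable S]
    (hS : ∀ d : ℕ, 0 < d → PiecewiseSyndetic {x : S | ∃ s : S, x = itAdd (d - 1) s})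
    (M : Set S) (hM : QuasiCentral M) (l : ℕ) :
    QuasiCentral
      {x : APsub S l | ∀ i : Fin (l + 1), (x : Fin (l + 1) → S) i ∈ M} := by
  classical
  obtain ⟨C, hCM, hdec, hps, htr⟩ := hM
  obtain ⟨F0, hT0⟩ := hps 0
  obtain ⟨x0, -⟩ := hT0 ∅
  haveI : Nonempty S := ⟨x0⟩
  haveI : Nonempty (APsub S l) := ⟨QC14.phiAP l (x0, x0)⟩
  have hmono : ∀ m n : ℕ, m ≤ n → C n ⊆ C m := by
    intro m n h
    induction n, h using Nat.le_induction with
    | base => exact subset_rfl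
    | succ n hn ih => exact (hdec n).trans ih
  refine ⟨fun n => {x : APsub S l | ∀ i : Fin (l + 1), (x : Fin (l + 1) → S) i ∈ C n},
    fun n x hx i => hCM n (hx i), fun n x hx i => hdec n (hx i), ?_, ?_⟩
  · intro n
    have hW := QC14.W_ps l (hps n)
    have him := QC14.ps_image (QC14.phiAP (S := S) l) (QC14.phiAP_add l)
      (QC14.phiAP_surj l) hW
    refine QC14.ps_mono ?_ him
    rintro _ ⟨ab, hab, rfl⟩ i
    exact hab i.val (Nat.lt_succ_iff.mp i.isLt)
  · intro n x hx
    choose m hm using fun i : Fin (l + 1) => htr n _ (hx i)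
    refine ⟨(Finset.univ : Finset (Fin (l + 1))).sup m, fun s hs i => ?_⟩
    have h1 : (s : Fin (l + 1) → S) i ∈ C (m i) :=
      hmono (m i) _ (Finset.le_sup (Finset.mem_univ i)) (hs i)
    exact hm i h1
end

section
/- If a thick subset of a commutative semigroup is partitioned into finitely many pieces, then at least one piece is piecewise syndetic. -/
lemma thick_ps {S : Type*} [AddCommSemigroup S] {B : Set S} (hB : Thick B) :
    PiecewiseSyndetic B := by
  classical
  obtain ⟨x₀, -⟩ := hB ∅
  refine ⟨{x₀}, fun F => ?_⟩
  obtain ⟨x, hx⟩ := hB (F.image (x₀ + ·))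
  refine ⟨x, fun f hf => ⟨x₀, Finset.mem_singleton_self _, ?_⟩⟩
  have := hx (x₀ + f) (Finset.mem_image_of_mem _ hf)
  rwa [add_assoc] at this

lemma ps_union {S : Type*} [AddCommSemigroup S] {A₁ A₂ : Set S}
    (h : PiecewiseSyndetic (A₁ ∪ A₂)) :
    PiecewiseSyndetic A₁ ∨ PiecewiseSyndetic A₂ := by
  classical
  obtain ⟨F, hF⟩ := h
  by_cases h₂ : PiecewiseSyndetic A₂
  · exact Or.inr h₂
  refine Or.inl ⟨F, fun K => ?_⟩
  rw [PiecewiseSyndetic] at h₂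
  push_neg at h₂
  have hnt := h₂ ((F ×ˢ K).image (fun p => p.1 + p.2))
  rw [Thick] at hnt
  push_neg at hnt
  obtain ⟨G, hG⟩ := hnt
  obtain ⟨x, hx⟩ := hF ((K ×ˢ G).image (fun p => p.1 + p.2))
  obtain ⟨g, hg, hgx⟩ := hG x
  refine ⟨g + x, fun k hk => ?_⟩
  have hmem : (k + g) + x ∈ {s : S | ∃ t ∈ F, t + s ∈ A₁ ∪ A₂} := by
    apply hx
    exact Finset.mem_image.2 ⟨(k, g), Finset.mem_product.2 ⟨hk, hg⟩, rfl⟩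
  obtain ⟨t, ht, htm⟩ := hmem
  refine ⟨t, ht, ?_⟩
  rcases htm with h1 | h2
  · rwa [add_assoc] at h1
  · exfalso
    apply hgx
    refine ⟨t + k, Finset.mem_image.2 ⟨(t, k), Finset.mem_product.2 ⟨ht, hk⟩, rfl⟩, ?_⟩
    have : t + (k + g + x) = t + k + (g + x) := by
      rw [add_assoc k g x, ← add_assoc t k (g + x)]
    rw [← this]
    exact h2

lemma ps_iUnion {S : Type*} [AddCommSemigroup S] [Nonempty S] :
    ∀ {r : ℕ} (C : Fin r → Set S), PiecewiseSyndetic (⋃ i, C i) →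
      ∃ i, PiecewiseSyndetic (C i) := by
  intro r
  induction r with
  | zero =>
      intro C hC
      exfalso
      obtain ⟨F, hF⟩ := hC
      obtain ⟨x, hx⟩ := hF {Classical.arbitrary S}
      obtain ⟨t, -, htm⟩ := hx (Classical.arbitrary S) (Finset.mem_singleton_self _)
      simpa using htm
  | succ r ih =>
      intro C hC
      have hsplit : (⋃ i, C i) = C 0 ∪ ⋃ i : Fin r, C i.succ := by
        ext s
        simp [Set.mem_iUnion, Fin.exists_fin_succ]
      rw [hsplit] at hC
      rcases ps_union hC with h | h
      · exact ⟨0, h⟩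
      · obtain ⟨i, hi⟩ := ih _ h
        exact ⟨i.succ, hi⟩

theorem stmt_17 {S : Type*} [AddCommSemigroup S] (B : Set S) (hB : Thick B)
    (r : ℕ) (C : Fin r → Set S) (hcover : (⋃ i, C i) = B)
    (hdisj : Pairwise (Function.onFun Disjoint C)) :
    ∃ i, PiecewiseSyndetic (C i) := by
  have : Nonempty S := ⟨(hB ∅).choose⟩
  exact ps_iUnion C (hcover ▸ thick_ps hB)
end

section
/- Let k ∈ ℕ and let A ⊆ ℤ be piecewise syndetic. Then the set {(a,d) ∈ ℤ × ℤ : a, a+d, a+2d, ..., a+kd ∈ A} is piecewise syndetic in ℤ². -/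
open Filter Set


namespace FG

section Abstract

variable {R : Type*} [AddSemigroup R] [TopologicalSpace R] [CompactSpace R] [T2Space R]

/-- Closed subsemigroup. -/
def IsCS (T : Set R) : Prop := T.Nonempty ∧ IsClosed T ∧ ∀ x ∈ T, ∀ y ∈ T, x + y ∈ T

/-- Closed left ideal of the subsemigroup `T`. -/
def IsCLI (T L : Set R) : Prop :=
  L.Nonempty ∧ IsClosed L ∧ L ⊆ T ∧ ∀ x ∈ T, ∀ y ∈ L, x + y ∈ L

/-- Minimal closed left ideal of `T`. -/
def MinCLI (T L : Set R) : Prop := IsCLI T L ∧ ∀ L', IsCLI T L' → L' ⊆ L → L' = L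

theorem IsCLI.isCS {T L : Set R} (h : IsCLI T L) : IsCS L :=
  ⟨h.1, h.2.1, fun x hx y hy => h.2.2.2 x (h.2.2.1 hx) y hy⟩

variable (hc : ∀ r : R, Continuous (· + r))

include hc

theorem image_rtrans_isCLI {T : Set R} (hT : IsCS T) {x : R} (hx : x ∈ T) :
    IsCLI T ((· + x) '' T) := by
  refine ⟨hT.1.image _, ((hT.2.1.isCompact).image (hc x)).isClosed, ?_, ?_⟩
  · rintro - ⟨t, ht, rfl⟩; exact hT.2.2 t ht x hx
  · rintro s hs - ⟨t, ht, rfl⟩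
    exact ⟨s + t, hT.2.2 s hs t ht, add_assoc s t x⟩

theorem exists_minCLI {T L₀ : Set R} (hL0 : IsCLI T L₀) :
    ∃ L, L ⊆ L₀ ∧ MinCLI T L := by
  have hzorn : ∀ c ⊆ {L | IsCLI T L}, IsChain (· ⊆ ·) c → c.Nonempty →
      ∃ lb ∈ {L | IsCLI T L}, ∀ s ∈ c, lb ⊆ s := by
    intro c hcS hchain hcne
    haveI := hcne.to_subtype
    have hdir : DirectedOn (· ⊇ ·) c := by
      intro a ha b hb
      rcases hchain.total ha hb with h | h
      · exact ⟨a, ha, Subset.rfl, h⟩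
      · exact ⟨b, hb, h, Subset.rfl⟩
    have hne : (⋂₀ c).Nonempty := by
      refine IsCompact.nonempty_sInter_of_directed_nonempty_isCompact_isClosed hdir
        (fun U hU => (hcS hU).1) (fun U hU => (hcS hU).2.1.isCompact)
        (fun U hU => (hcS hU).2.1)
    obtain ⟨W, hW⟩ := hcne
    refine ⟨⋂₀ c, ⟨hne, isClosed_sInter fun U hU => (hcS hU).2.1,
      fun y hy => (hcS hW).2.2.1 (hy W hW), ?_⟩, fun s hs => sInter_subset_of_mem hs⟩
    · intro s hsT y hy U hU
      exact (hcS hU).2.2.2 s hsT y (hy U hU)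
  obtain ⟨m, hm, hmin⟩ := zorn_superset_nonempty {L | IsCLI T L} hzorn L₀ hL0
  refine ⟨m, hm, hmin.1, fun L' hL' hsub => ?_⟩
  exact le_antisymm hsub (hmin.2 hL' hsub)

/-- Ellis' theorem: a nonempty compact (closed) subsemigroup contains an idempotent. -/
theorem exists_idem {T : Set R} (hT : IsCS T) : ∃ e ∈ T, e + e = e := by
  have hzorn : ∀ c ⊆ {K : Set R | IsCS K ∧ K ⊆ T}, IsChain (· ⊆ ·) c → c.Nonempty →
      ∃ lb ∈ {K : Set R | IsCS K ∧ K ⊆ T}, ∀ s ∈ c, lb ⊆ s := by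
    intro c hcS hchain hcne
    haveI := hcne.to_subtype
    have hdir : DirectedOn (· ⊇ ·) c := by
      intro a ha b hb
      rcases hchain.total ha hb with h | h
      · exact ⟨a, ha, Subset.rfl, h⟩
      · exact ⟨b, hb, h, Subset.rfl⟩
    have hne : (⋂₀ c).Nonempty :=
      IsCompact.nonempty_sInter_of_directed_nonempty_isCompact_isClosed hdir
        (fun U hU => (hcS hU).1.1) (fun U hU => (hcS hU).1.2.1.isCompact)
        (fun U hU => (hcS hU).1.2.1)
    obtain ⟨W, hW⟩ := hcne
    refine ⟨⋂₀ c, ⟨⟨hne, isClosed_sInter fun U hU => (hcS hU).1.2.1, ?_⟩, ?_⟩,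
      fun s hs => sInter_subset_of_mem hs⟩
    · intro a ha b hb U hU
      exact (hcS hU).1.2.2 a (ha U hU) b (hb U hU)
    · exact fun y hy => (hcS hW).2 (hy W hW)
  obtain ⟨m, hmT, hmem, hminimal⟩ :=
    zorn_superset_nonempty {K | IsCS K ∧ K ⊆ T} hzorn T ⟨hT, Subset.rfl⟩
  obtain ⟨hmCS, hmsubT⟩ := hmem
  obtain ⟨x, hx⟩ := hmCS.1
  have h1 : (· + x) '' m = m := by
    have hP : IsCS ((· + x) '' m) ∧ ((· + x) '' m) ⊆ T := by
      constructor
      · refine ⟨hmCS.1.image _, ((hmCS.2.1.isCompact).image (hc x)).isClosed, ?_⟩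
        rintro - ⟨a, ha, rfl⟩ - ⟨b, hb, rfl⟩
        refine ⟨a + x + b, hmCS.2.2 _ (hmCS.2.2 a ha x hx) b hb, ?_⟩
        simp only [add_assoc]
      · rintro - ⟨a, ha, rfl⟩
        exact hmsubT (hmCS.2.2 a ha x hx)
    have hsub : (· + x) '' m ⊆ m := by
      rintro - ⟨a, ha, rfl⟩; exact hmCS.2.2 a ha x hx
    exact Subset.antisymm hsub (hminimal hP hsub)
  have hx' : ∃ a ∈ m, a + x = x := by
    have : x ∈ (· + x) '' m := h1.symm ▸ hx
    rcases this with ⟨a, ha, hax⟩; exact ⟨a, ha, hax⟩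
  set C := {a ∈ m | a + x = x} with hC
  have hCm : IsCS C ∧ C ⊆ T := by
    constructor
    · refine ⟨by rcases hx' with ⟨a, ha, hax⟩; exact ⟨a, ha, hax⟩, ?_, ?_⟩
      · exact hmCS.2.1.inter (isClosed_singleton.preimage (hc x))
      · rintro a ⟨ham, hax⟩ b ⟨hbm, hbx⟩
        exact ⟨hmCS.2.2 a ham b hbm, by rw [add_assoc, hbx, hax]⟩
    · exact fun a ha => hmsubT ha.1
  have hCsub : C ⊆ m := fun a ha => ha.1
  have : C = m := Subset.antisymm hCsub (hminimal hCm hCsub)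
  have hxC : x ∈ C := this.symm ▸ hx
  exact ⟨x, hmsubT hx, hxC.2⟩

theorem MinCLI.eq_image {T L : Set R} (hT : IsCS T) (hL : MinCLI T L) {x : R} (hx : x ∈ L) :
    (· + x) '' T = L := by
  refine hL.2 _ (image_rtrans_isCLI hc hT (hL.1.2.2.1 hx)) ?_
  rintro - ⟨t, ht, rfl⟩; exact hL.1.2.2.2 t ht x hx

/-- In a minimal left ideal, each element admits an idempotent left identity. -/
theorem MinCLI.exists_idem_left_id {T L : Set R} (hT : IsCS T) (hL : MinCLI T L)
    {x : R} (hx : x ∈ L) : ∃ e ∈ L, e + e = e ∧ e + x = x := by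
  -- L + x = L
  have hLx : (· + x) '' L = L := by
    refine hL.2 _ ⟨hL.1.1.image _, ((hL.1.2.1.isCompact).image (hc x)).isClosed, ?_, ?_⟩ ?_
    · rintro - ⟨l, hl, rfl⟩; exact hL.1.2.2.1 (hL.1.2.2.2 l (hL.1.2.2.1 hl) x hx)
    · rintro s hs - ⟨l, hl, rfl⟩
      exact ⟨s + l, hL.1.2.2.2 s hs l hl, add_assoc s l x⟩
    · rintro - ⟨l, hl, rfl⟩; exact hL.1.2.2.2 l (hL.1.2.2.1 hl) x hx
  have hxex : ∃ l ∈ L, l + x = x := by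
    have : x ∈ (· + x) '' L := hLx.symm ▸ hx
    rcases this with ⟨l, hl, hlx⟩; exact ⟨l, hl, hlx⟩
  set C := {a ∈ L | a + x = x} with hC
  have hCS : IsCS C := by
    refine ⟨by rcases hxex with ⟨l, hl, hlx⟩; exact ⟨l, hl, hlx⟩, ?_, ?_⟩
    · exact hL.1.2.1.inter (isClosed_singleton.preimage (hc x))
    · rintro a ⟨haL, hax⟩ b ⟨hbL, hbx⟩
      exact ⟨hL.1.2.2.2 a (hL.1.2.2.1 haL) b hbL, by rw [add_assoc, hbx, hax]⟩
  obtain ⟨e, heC, hee⟩ := exists_idem hc hCS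
  exact ⟨e, heC.1, hee, heC.2⟩

/-- An idempotent in a minimal left ideal is a right identity for the ideal. -/
theorem MinCLI.right_id {T L : Set R} (hT : IsCS T) (hL : MinCLI T L)
    {e : R} (he : e ∈ L) (hee : e + e = e) {y : R} (hy : y ∈ L) : y + e = y := by
  have := hL.eq_image hc hT he
  have hy' : y ∈ (· + e) '' T := this.symm ▸ hy
  rcases hy' with ⟨t, ht, rfl⟩
  rw [add_assoc, hee]

/-- Right translate of a minimal left ideal is a minimal left ideal. -/
theorem MinCLI.image_rtrans {T M : Set R} (hT : IsCS T) (hM : MinCLI T M)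
    {x : R} (hx : x ∈ T) : MinCLI T ((· + x) '' M) := by
  have hCLI : IsCLI T ((· + x) '' M) := by
    refine ⟨hM.1.1.image _, ((hM.1.2.1.isCompact).image (hc x)).isClosed, ?_, ?_⟩
    · rintro - ⟨m, hm, rfl⟩; exact hT.2.2 m (hM.1.2.2.1 hm) x hx
    · rintro s hs - ⟨m, hm, rfl⟩
      exact ⟨s + m, hM.1.2.2.2 s hs m hm, add_assoc s m x⟩
  refine ⟨hCLI, fun N hN hsub => ?_⟩
  obtain ⟨n, hn⟩ := hN.1
  obtain ⟨m, hm, rfl⟩ := hsub hn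
  refine Subset.antisymm hsub ?_
  have hTm : (· + m) '' T = M := hM.eq_image hc hT hm
  rintro - ⟨m', hm', rfl⟩
  have : m' ∈ (· + m) '' T := hTm.symm ▸ hm'
  rcases this with ⟨t, ht, rfl⟩
  have : t + (m + x) ∈ N := hN.2.2.2 t ht _ hn
  rwa [← add_assoc] at this

/-- Key lemma: an idempotent of a closed subsemigroup `T'` that lies in a minimal closed left
ideal of the ambient semigroup lies in a minimal closed left ideal of `T'`. -/
theorem idem_mem_minCLI {T' L : Set R} [Nonempty R] (hT' : IsCS T') (hL : MinCLI univ L)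
    {e : R} (heT : e ∈ T') (heL : e ∈ L) (hee : e + e = e) :
    ∃ M, MinCLI T' M ∧ e ∈ M := by
  have hUnivCS : IsCS (univ : Set R) :=
    ⟨univ_nonempty, isClosed_univ, fun x _ y _ => mem_univ _⟩
  have hTe : IsCLI T' ((· + e) '' T') := image_rtrans_isCLI hc hT' heT
  obtain ⟨M, hMsub, hM⟩ := exists_minCLI hc hTe
  have hMCS : IsCS M := hM.1.isCS
  obtain ⟨f, hfM, hff⟩ := exists_idem hc hMCS
  -- M ⊆ L
  have hML : M ⊆ L := by
    intro y hy
    obtain ⟨t, _, rfl⟩ := hMsub hy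
    exact hL.1.2.2.2 t (mem_univ t) e heL
  -- e + f = e
  have hef : e + f = e := hL.right_id hc hUnivCS (hML hfM) hff heL
  have : e + f ∈ M := hM.1.2.2.2 e heT f hfM
  exact ⟨M, hM, hef ▸ this⟩

/-- Pullback of a minimal element along a surjection onto the range of a continuous
homomorphism. -/
theorem exists_min_preimage {R₂ : Type*} [AddSemigroup R₂] [TopologicalSpace R₂]
    [CompactSpace R₂] [T2Space R₂] (hc₂ : ∀ r : R₂, Continuous (· + r))
    (ψ : R₂ → R) (hψc : Continuous ψ) (hψ : ∀ a b, ψ (a + b) = ψ a + ψ b)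
    {M : Set R} (hM : MinCLI (range ψ) M) {x : R} (hx : x ∈ M) :
    ∃ q L₁, MinCLI (univ : Set R₂) L₁ ∧ q ∈ L₁ ∧ ψ q = x := by
  obtain ⟨q₀, hq₀⟩ : ∃ q₀, ψ q₀ = x := hM.1.2.2.1 hx
  have hUnivCS : IsCS (univ : Set R₂) :=
    ⟨⟨q₀, mem_univ q₀⟩, isClosed_univ, fun a _ b _ => mem_univ _⟩
  have hL₀ : IsCLI (univ : Set R₂) ((· + q₀) '' univ) :=
    image_rtrans_isCLI hc₂ hUnivCS (mem_univ q₀)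
  obtain ⟨L₁, hL₁sub, hL₁⟩ := exists_minCLI hc₂ hL₀
  -- ψ '' L₁ is a closed left ideal of range ψ contained in M
  have hcli : IsCLI (range ψ) (ψ '' L₁) := by
    refine ⟨hL₁.1.1.image _, ((hL₁.1.2.1.isCompact).image hψc).isClosed, ?_, ?_⟩
    · rintro - ⟨l, _, rfl⟩; exact mem_range_self l
    · rintro - ⟨w, rfl⟩ - ⟨l, hl, rfl⟩
      exact ⟨w + l, hL₁.1.2.2.2 w (mem_univ w) l hl, hψ w l⟩
  have hsubM : ψ '' L₁ ⊆ M := by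
    rintro - ⟨l, hl, rfl⟩
    obtain ⟨u, -, rfl⟩ := hL₁sub hl
    rw [hψ u q₀, hq₀]
    exact hM.1.2.2.2 (ψ u) (mem_range_self u) x hx
  have : ψ '' L₁ = M := hM.2 _ hcli hsubM
  have hxmem : x ∈ ψ '' L₁ := this.symm ▸ hx
  obtain ⟨q, hq, hqx⟩ := hxmem
  exact ⟨q, L₁, hL₁, hq, hqx⟩

end Abstract

section Ultra

attribute [local instance] Ultrafilter.add Ultrafilter.addSemigroup

variable {S : Type*} [AddSemigroup S]

theorem mem_addU {A : Set S} {U V : Ultrafilter S} :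
    A ∈ U + V ↔ {m | {m' | m + m' ∈ A} ∈ V} ∈ U := Iff.rfl

theorem mem_pure_addU {A : Set S} {a : S} {V : Ultrafilter S} :
    A ∈ (pure a : Ultrafilter S) + V ↔ {m' | a + m' ∈ A} ∈ V := by
  rw [mem_addU]; exact Ultrafilter.mem_pure

theorem mapU_add {S₂ : Type*} [AddSemigroup S₂] (f : S → S₂)
    (hf : ∀ a b, f (a + b) = f a + f b) (U V : Ultrafilter S) :
    Ultrafilter.map f (U + V) = Ultrafilter.map f U + Ultrafilter.map f V := by
  apply Ultrafilter.coe_injective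
  apply Filter.ext
  intro A
  show A ∈ Ultrafilter.map f (U + V) ↔ A ∈ Ultrafilter.map f U + Ultrafilter.map f V
  rw [Ultrafilter.mem_map, mem_addU, mem_addU]
  have : ∀ m : S, ({m' | m + m' ∈ f ⁻¹' A} ∈ V ↔ {m' | f m + m' ∈ A} ∈ Ultrafilter.map f V) := by
    intro m
    rw [Ultrafilter.mem_map]
    have : (f ⁻¹' {m' | f m + m' ∈ A}) = {m' | m + m' ∈ f ⁻¹' A} := by
      ext y; simp [hf]
    rw [this]
  constructor
  · intro h
    have : {m | {m' | m + m' ∈ f ⁻¹' A} ∈ V} ⊆ f ⁻¹' {u | {m' | u + m' ∈ A} ∈ Ultrafilter.map f V} := by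
      intro m hm
      simp only [Set.mem_preimage, Set.mem_setOf_eq]
      exact (this m).1 hm
    exact Ultrafilter.mem_map.2 ((U.toFilter).mem_of_superset h this)
  · intro h
    have h' := Ultrafilter.mem_map.1 h
    refine (U.toFilter).mem_of_superset h' ?_
    intro m hm
    exact (this m).2 hm

theorem continuous_mapU {S₂ : Type*} (f : S → S₂) :
    Continuous (Ultrafilter.map f : Ultrafilter S → Ultrafilter S₂) :=
  ultrafilterBasis_is_basis.continuous_iff.2 <| Set.forall_mem_range.mpr fun s => by
    have : (Ultrafilter.map f ⁻¹' {u : Ultrafilter S₂ | s ∈ u}) =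
        {p : Ultrafilter S | f ⁻¹' s ∈ p} := by
      ext p; exact Ultrafilter.mem_map
    rw [this]
    exact ultrafilter_isOpen_basic _

end Ultra

section PS

attribute [local instance] Ultrafilter.add Ultrafilter.addSemigroup

variable {S : Type*} [AddCommSemigroup S]

theorem univ_isCS [Nonempty (Ultrafilter S)] : IsCS (univ : Set (Ultrafilter S)) :=
  ⟨univ_nonempty, isClosed_univ, fun _ _ _ _ => mem_univ _⟩

/-- If a set belongs to an ultrafilter lying in a minimal closed left ideal, it is
piecewise syndetic. -/
theorem ps_of_min {Tset : Set S} {q : Ultrafilter S} {L : Set (Ultrafilter S)}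
    (hL : MinCLI univ L) (hq : q ∈ L) (hTq : Tset ∈ q) : PiecewiseSyndetic Tset := by
  haveI : Nonempty (Ultrafilter S) := ⟨q⟩
  have hc : ∀ r : Ultrafilter S, Continuous (· + r) := Ultrafilter.continuous_add_left
  -- every element of L sees a translate of Tset
  have hstep : ∀ u ∈ L, ∃ t : S, {y | t + y ∈ Tset} ∈ u := by
    intro u hu
    have heq := hL.eq_image hc univ_isCS hu
    have hqmem : q ∈ (· + u) '' univ := heq.symm ▸ hq
    obtain ⟨w, -, rfl⟩ := hqmem
    have hW : {m | {y | m + y ∈ Tset} ∈ u} ∈ w := mem_addU.1 hTq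
    obtain ⟨t, ht⟩ := Ultrafilter.nonempty_of_mem hW
    exact ⟨t, ht⟩
  -- compactness: finitely many translates suffice
  have hcover : L ⊆ ⋃ t : S, {u : Ultrafilter S | {y | t + y ∈ Tset} ∈ u} := by
    intro u hu
    obtain ⟨t, ht⟩ := hstep u hu
    exact mem_iUnion.2 ⟨t, ht⟩
  obtain ⟨F, hF⟩ := (hL.1.2.1.isCompact).elim_finite_subcover _
    (fun t : S => ultrafilter_isOpen_basic {y | t + y ∈ Tset}) hcover
  refine ⟨F, ?_⟩
  intro G
  have hYg : ∀ g : S, {x | g + x ∈ {s | ∃ t ∈ F, t + s ∈ Tset}} ∈ q := by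
    intro g
    have hgq : (pure g : Ultrafilter S) + q ∈ L := hL.1.2.2.2 _ (mem_univ _) q hq
    obtain ⟨t, htF, ht⟩ := mem_iUnion₂.1 (hF hgq)
    have : {m' | g + m' ∈ {y | t + y ∈ Tset}} ∈ q := mem_pure_addU.1 ht
    refine q.toFilter.mem_of_superset this ?_
    intro x hx
    exact ⟨t, htF, hx⟩
  have hbig : (⋂ g ∈ (G : Set S), {x | g + x ∈ {s | ∃ t ∈ F, t + s ∈ Tset}}) ∈ q :=
    (Filter.biInter_mem G.finite_toSet).2 fun g _ => hYg g
  obtain ⟨x, hx⟩ := Ultrafilter.nonempty_of_mem hbig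
  exact ⟨x, fun f hf => by simpa using mem_iInter₂.1 hx f hf⟩

/-- A piecewise syndetic set belongs to some ultrafilter in a minimal closed left ideal;
moreover we can find an associated idempotent. -/
theorem min_of_ps {A : Set S} (hA : PiecewiseSyndetic A) :
    ∃ (L : Set (Ultrafilter S)) (p e : Ultrafilter S),
      MinCLI univ L ∧ p ∈ L ∧ A ∈ p ∧ e ∈ L ∧ e + e = e ∧ e + p = p := by
  classical
  obtain ⟨F, hThick⟩ := hA
  set B := {s : S | ∃ t ∈ F, t + s ∈ A} with hB
  -- an ultrafilter containing all translates ranges of B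
  have hFIP : ∀ T : Finset (Set S),
      (↑T : Set (Set S)) ⊆ range (fun g : S => {x | g + x ∈ B}) → (⋂₀ (↑T : Set (Set S))).Nonempty := by
    intro T hT
    have hsel : ∀ t ∈ T, ∃ g : S, {x | g + x ∈ B} = t := by
      intro t ht
      obtain ⟨g, hg⟩ := hT ht
      exact ⟨g, hg⟩
    choose sel hsel' using hsel
    obtain ⟨x, hx⟩ := hThick (T.attach.image fun t : {u // u ∈ T} => sel t.1 t.2)
    refine ⟨x, ?_⟩
    intro t ht
    have hmem : sel t ht + x ∈ B := hx _ (Finset.mem_image.2 ⟨⟨t, ht⟩, Finset.mem_attach _ _, rfl⟩)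
    have hxt : x ∈ {y | sel t ht + y ∈ B} := hmem
    rwa [hsel' t ht] at hxt
  obtain ⟨r, hr⟩ := Ultrafilter.exists_ultrafilter_of_finite_inter_nonempty _ hFIP
  have hrg : ∀ g : S, {x | g + x ∈ B} ∈ r := fun g => hr (mem_range_self g)
  haveI : Nonempty (Ultrafilter S) := ⟨r⟩
  have hc : ∀ u : Ultrafilter S, Continuous (· + u) := Ultrafilter.continuous_add_left
  obtain ⟨L, hLsub, hL⟩ := exists_minCLI hc (image_rtrans_isCLI hc univ_isCS (mem_univ r))
  obtain ⟨q, hq⟩ := hL.1.1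
  -- B ∈ q
  have hBq : B ∈ q := by
    obtain ⟨w, -, rfl⟩ := hLsub hq
    rw [mem_addU]
    have : {m : S | {y | m + y ∈ B} ∈ r} = univ := eq_univ_of_forall hrg
    rw [this]
    exact Filter.univ_mem
  -- some single translate of A is in q
  have hone : ∃ t ∈ F, {s | t + s ∈ A} ∈ q := by
    by_contra h
    push_neg at h
    have hcompl : (⋂ t ∈ (F : Set S), {s | t + s ∈ A}ᶜ) ∈ q :=
      (Filter.biInter_mem F.finite_toSet).2 fun t ht =>
        (Ultrafilter.compl_mem_iff_notMem).2 (h t ht)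
    obtain ⟨s, hs⟩ := Ultrafilter.nonempty_of_mem (q.toFilter.inter_mem hBq hcompl)
    obtain ⟨t, htF, hts⟩ := hs.1
    exact (mem_iInter₂.1 hs.2 t htF) hts
  obtain ⟨t, htF, ht⟩ := hone
  set p := (pure t : Ultrafilter S) + q with hp
  have hpL : p ∈ L := hL.1.2.2.2 _ (mem_univ _) q hq
  have hAp : A ∈ p := mem_pure_addU.2 ht
  obtain ⟨e, heL, hee, hep⟩ := hL.exists_idem_left_id hc univ_isCS hpL
  exact ⟨L, p, e, hL, hpL, hAp, heL, hee, hep⟩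

end PS

section Main

attribute [local instance] Ultrafilter.add Ultrafilter.addSemigroup

theorem main (k : ℕ) (A : Set ℤ) (hA : PiecewiseSyndetic A) :
    PiecewiseSyndetic
      {p : ℤ × ℤ | ∀ i : ℕ, i ≤ k → p.1 + (i : ℤ) * p.2 ∈ A} := by
  classical
  set Tset : Set (ℤ × ℤ) := {p : ℤ × ℤ | ∀ i : ℕ, i ≤ k → p.1 + (i : ℤ) * p.2 ∈ A} with hTset
  -- the minimal ultrafilter data for A
  obtain ⟨L, p, e, hL, hpL, hAp, heL, hee, hep⟩ := min_of_ps hA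
  haveI : Nonempty (Ultrafilter ℤ) := ⟨p⟩
  have hc₁ : ∀ r : Ultrafilter ℤ, Continuous (· + r) := Ultrafilter.continuous_add_left
  have hc₂ : ∀ r : Ultrafilter (ℤ × ℤ), Continuous (· + r) := Ultrafilter.continuous_add_left
  -- the product semigroup Y
  have hcY : ∀ y : Fin (k+1) → Ultrafilter ℤ,
      Continuous (fun x : Fin (k+1) → Ultrafilter ℤ => x + y) := by
    intro y
    exact continuous_pi fun i => (hc₁ (y i)).comp (continuous_apply i)
  -- the homomorphisms
  set fi : Fin (k+1) → (ℤ × ℤ) → ℤ := fun i z => z.1 + (i : ℤ) * z.2 with hfi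
  have hfihom : ∀ i : Fin (k+1), ∀ a b : ℤ × ℤ, fi i (a + b) = fi i a + fi i b := by
    intro i a b
    simp only [hfi, Prod.fst_add, Prod.snd_add]
    ring
  set φ : Ultrafilter (ℤ × ℤ) → (Fin (k+1) → Ultrafilter ℤ) :=
    fun q i => Ultrafilter.map (fi i) q with hφ
  have hφadd : ∀ a b, φ (a + b) = φ a + φ b := by
    intro a b
    funext i
    exact mapU_add (fi i) (hfihom i) a b
  have hφc : Continuous φ := continuous_pi fun i => continuous_mapU (fi i)
  -- range φ is a closed subsemigroup of Y
  have hrange : IsCS (range φ) := by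
    refine ⟨range_nonempty _, ?_, ?_⟩
    · rw [← image_univ]
      exact (isCompact_univ.image hφc).isClosed
    · rintro - ⟨a, rfl⟩ - ⟨b, rfl⟩
      exact ⟨a + b, hφadd a b⟩
  -- the power of L is a minimal closed left ideal of Y
  set Lpow : Set (Fin (k+1) → Ultrafilter ℤ) := ⋂ i, (fun y => y i) ⁻¹' L with hLpow
  have hLpowCLI : IsCLI univ Lpow := by
    refine ⟨⟨fun _ => p, mem_iInter.2 fun i => hpL⟩, ?_, subset_univ _, ?_⟩
    · exact isClosed_iInter fun i => hL.1.2.1.preimage (continuous_apply i)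
    · intro x _ y hy
      refine mem_iInter.2 fun i => ?_
      exact hL.1.2.2.2 (x i) (mem_univ _) (y i) (mem_iInter.1 hy i)
  have hLpowMin : MinCLI univ Lpow := by
    refine ⟨hLpowCLI, fun N hN hsub => ?_⟩
    obtain ⟨x, hx⟩ := hN.1
    refine Subset.antisymm hsub ?_
    intro z hz
    have hxi : ∀ i, x i ∈ L := fun i => mem_iInter.1 (hsub hx) i
    have hw : ∀ i, ∃ w : Ultrafilter ℤ, w + x i = z i := by
      intro i
      have heq := hL.eq_image hc₁ univ_isCS (hxi i)
      have : z i ∈ (· + x i) '' univ := heq.symm ▸ mem_iInter.1 hz i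
      obtain ⟨w, -, hwi⟩ := this
      exact ⟨w, hwi⟩
    choose w hwspec using hw
    have : w + x = z := funext fun i => hwspec i
    exact this ▸ hN.2.2.2 w (mem_univ _) x hx
  -- the diagonal idempotent
  set De : Fin (k+1) → Ultrafilter ℤ := fun _ => e with hDe
  have hDeLpow : De ∈ Lpow := mem_iInter.2 fun _ => heL
  have hDee : De + De = De := funext fun i => hee
  have hDerange : De ∈ range φ := by
    refine ⟨Ultrafilter.map (fun a : ℤ => (a, (0 : ℤ))) e, ?_⟩
    funext i
    show Ultrafilter.map (fi i) (Ultrafilter.map (fun a : ℤ => (a, (0 : ℤ))) e) = e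
    rw [Ultrafilter.map_map]
    have : (fi i ∘ fun a : ℤ => (a, (0 : ℤ))) = id := by
      funext a; simp [hfi]
    rw [this, Ultrafilter.map_id]
  -- De is in a minimal left ideal of range φ
  obtain ⟨M, hM, hDeM⟩ := idem_mem_minCLI hcY hrange hLpowMin hDerange hDeLpow hDee
  -- pull back to a minimal ultrafilter on ℤ × ℤ
  obtain ⟨q, L₁, hL₁, hqL₁, hφq⟩ := exists_min_preimage hcY hc₂ φ hφc hφadd hM hDeM
  -- the translated set
  set At : Set ℤ := {a : ℤ | {b : ℤ | a + b ∈ A} ∈ p} with hAt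
  have hAte : At ∈ e := by
    have : A ∈ e + p := hep.symm ▸ hAp
    exact mem_addU.1 this
  have hqi : ∀ i : Fin (k+1), (fi i) ⁻¹' At ∈ q := by
    intro i
    have : Ultrafilter.map (fi i) q = e := congrFun hφq i
    rw [← Ultrafilter.mem_map, this]
    exact hAte
  -- the embedded ultrafilter
  set ιp : Ultrafilter (ℤ × ℤ) := Ultrafilter.map (fun a : ℤ => (a, (0 : ℤ))) p with hιp
  -- Tset belongs to q + ιp
  have hTmem : Tset ∈ q + ιp := by
    rw [mem_addU]
    have hbig : (⋂ i : Fin (k+1), (fi i) ⁻¹' At) ∈ q := Filter.iInter_mem.2 hqi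
    refine q.toFilter.mem_of_superset hbig ?_
    intro w hw
    show {v | w + v ∈ Tset} ∈ ιp
    rw [hιp, Ultrafilter.mem_map]
    have hPi : (⋂ i : Fin (k+1), {b : ℤ | (w.1 + (i : ℤ) * w.2) + b ∈ A}) ∈ p := by
      refine Filter.iInter_mem.2 fun i => ?_
      have := mem_iInter.1 hw i
      exact this
    refine p.toFilter.mem_of_superset hPi ?_
    intro a ha
    show w + (a, (0 : ℤ)) ∈ Tset
    intro i hik
    have hi' : i < k + 1 := Nat.lt_succ_of_le hik
    have hmem := mem_iInter.1 ha ⟨i, hi'⟩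
    simp only [mem_setOf_eq] at hmem
    have h1 : (w + (a, (0 : ℤ))).1 = w.1 + a := rfl
    have h2 : (w + (a, (0 : ℤ))).2 = w.2 + 0 := rfl
    show (w + (a, (0:ℤ))).1 + (i : ℤ) * (w + (a, (0:ℤ))).2 ∈ A
    rw [h1, h2]
    have : w.1 + a + (i : ℤ) * (w.2 + 0) = w.1 + (i : ℤ) * w.2 + a := by ring
    rw [this]
    exact hmem
  -- q + ιp is still minimal
  have hmin' : MinCLI univ ((· + ιp) '' L₁) :=
    hL₁.image_rtrans hc₂ (univ_isCS (S := ℤ × ℤ)) (mem_univ ιp)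
  exact ps_of_min hmin' ⟨q, hqL₁, rfl⟩ hTmem

end Main

end FG

theorem stmt_18 (k : ℕ) (A : Set ℤ) (hA : PiecewiseSyndetic A) :
    PiecewiseSyndetic
      {p : ℤ × ℤ | ∀ i : ℕ, i ≤ k → p.1 + (i : ℤ) * p.2 ∈ A} :=
  FG.main k A hA
end
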